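/- arXiv:2209.00214 — 2 statements merged into one kernel-verified Lean document; each statement's English description precedes it below -/
import Mathlib

section
/- Let φ : M₃ → M₃ be a linear preserver of the Lorentz spectrum, and let A = [0 0; vᵀ a] with v ∈ ℝ² nonzero and 0 < a + ‖v‖. Then either (i) φ(A) = [0 0; wᵀ a] for some w ∈ ℝ² with ‖w‖ = ‖v‖, or (ii) φ(A) = [0 0; wᵀ (a + ‖v‖ − ‖w‖)] for some w ∈ ℝ² with (a + ‖v‖)/2 ≤ ‖w‖ ≤ a + ‖v‖, and moreover a − ‖v‖ ≤ 0 ≤ a. -/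
open Matrix

noncomputable section

/-- Euclidean norm of a vector in `ℝ^n`. -/
def euclNorm {n : ℕ} (x : Fin n → ℝ) : ℝ := Real.sqrt (∑ i, x i ^ 2)

/-- The Lorentz cone in `ℝ^(n+1)`: vectors `(ξ, η)` with `‖ξ‖ ≤ η`. -/
def lorentzCone (n : ℕ) : Set (Fin (n + 1) → ℝ) :=
  {x | euclNorm (fun i : Fin n => x i.castSucc) ≤ x (Fin.last n)}

/-- `x` is a Lorentz eigenvector of `A` associated with the Lorentz eigenvalue `l`. -/
def IsLEigenvector {n : ℕ} (A : Matrix (Fin (n + 1)) (Fin (n + 1)) ℝ) (l : ℝ)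
    (x : Fin (n + 1) → ℝ) : Prop :=
  x ≠ 0 ∧ x ∈ lorentzCone n ∧ (A - l • 1) *ᵥ x ∈ lorentzCone n ∧
    x ⬝ᵥ ((A - l • 1) *ᵥ x) = 0

/-- The Lorentz spectrum of `A`. -/
def sigmaL {n : ℕ} (A : Matrix (Fin (n + 1)) (Fin (n + 1)) ℝ) : Set ℝ :=
  {l | ∃ x, IsLEigenvector A l x}

/-- The interior Lorentz spectrum of `A`. -/
def sigmaInt {n : ℕ} (A : Matrix (Fin (n + 1)) (Fin (n + 1)) ℝ) : Set ℝ :=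
  {l | ∃ x, IsLEigenvector A l x ∧
    euclNorm (fun i : Fin n => x i.castSucc) < x (Fin.last n)}

/-- The boundary Lorentz spectrum of `A`. -/
def sigmaBd {n : ℕ} (A : Matrix (Fin (n + 1)) (Fin (n + 1)) ℝ) : Set ℝ :=
  {l | ∃ x, IsLEigenvector A l x ∧
    euclNorm (fun i : Fin n => x i.castSucc) = x (Fin.last n)}

/-- The block matrix `[X u; vᵀ a]` in `M₃`. -/
def blk (X : Matrix (Fin 2) (Fin 2) ℝ) (u v : Fin 2 → ℝ) (a : ℝ) :
    Matrix (Fin 3) (Fin 3) ℝ :=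
  Matrix.of (Fin.snoc (fun i : Fin 2 => Fin.snoc (X i) (u i)) (Fin.snoc v a))


open Polynomial

lemma enorm_eq (w : Fin 2 → ℝ) : euclNorm w = Real.sqrt (w 0 ^ 2 + w 1 ^ 2) := by
  simp [euclNorm, Fin.sum_univ_two]

lemma mem_cone (x : Fin 3 → ℝ) :
    x ∈ lorentzCone 2 ↔ Real.sqrt (x 0 ^ 2 + x 1 ^ 2) ≤ x 2 := by
  have h0 : (Fin.castSucc (0 : Fin 2)) = (0 : Fin 3) := rfl
  have h1 : (Fin.castSucc (1 : Fin 2)) = (1 : Fin 3) := rfl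
  have h2 : (Fin.last 2) = (2 : Fin 3) := rfl
  simp [lorentzCone, euclNorm, Fin.sum_univ_two, h0, h1, h2]

lemma blk_ent (X : Matrix (Fin 2) (Fin 2) ℝ) (u v : Fin 2 → ℝ) (a : ℝ) :
    blk X u v a = !![X 0 0, X 0 1, u 0; X 1 0, X 1 1, u 1; v 0, v 1, a] := by
  ext i j
  fin_cases i <;> fin_cases j <;> simp [blk, Fin.snoc] <;> rfl

lemma eig_mulVec (A : Matrix (Fin 3) (Fin 3) ℝ) (l : ℝ) (x : Fin 3 → ℝ) :
    (A - l • (1:Matrix (Fin 3) (Fin 3) ℝ)) *ᵥ x = A *ᵥ x - l • x := by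
  rw [Matrix.sub_mulVec, Matrix.smul_mulVec, Matrix.one_mulVec]

lemma S1_sub_mulVec (w : Fin 2 → ℝ) (b l : ℝ) (x : Fin 3 → ℝ) :
    (blk 0 0 w b - l • 1) *ᵥ x
      = ![-(l * x 0), -(l * x 1), w 0 * x 0 + w 1 * x 1 + b * x 2 - l * x 2] := by
  rw [eig_mulVec]
  funext i
  fin_cases i <;>
    simp [blk_ent, Matrix.mulVec, dotProduct, Fin.sum_univ_three] <;> ring

lemma vec3_ne (x : Fin 3 → ℝ) (hx : x ≠ 0) : ¬ (x 0 = 0 ∧ x 1 = 0 ∧ x 2 = 0) := by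
  rintro ⟨h0, h1, h2⟩
  exact hx (funext fun i => by fin_cases i <;> assumption)

lemma exists_unit (w : Fin 2 → ℝ) (d : ℝ) (hd : d^2 ≤ w 0^2 + w 1^2) :
    ∃ c s : ℝ, c^2 + s^2 = 1 ∧ w 0 * c + w 1 * s = d := by
  rcases eq_or_ne w 0 with rfl|hw
  · have hd0 : d^2 ≤ 0 := by simpa using hd
    have : d = 0 := by nlinarith
    exact ⟨1, 0, by norm_num, by simp [this]⟩
  · obtain ⟨i, hi⟩ := Function.ne_iff.mp hw
    have hN : 0 < w 0^2 + w 1^2 := by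
      fin_cases i
      · simp only [Pi.zero_apply] at hi; positivity
      · simp only [Pi.zero_apply] at hi; positivity
    set N := w 0^2 + w 1^2 with hNdef
    set s0 := Real.sqrt (N - d^2) with hs0def
    have hs0 : s0^2 = N - d^2 := Real.sq_sqrt (by linarith)
    refine ⟨(d * w 0 - s0 * w 1)/N, (d * w 1 + s0 * w 0)/N, ?_, ?_⟩
    · field_simp
      linear_combination N * hs0
    · field_simp
      ring

lemma dot3 (x y : Fin (2+1) → ℝ) : x ⬝ᵥ y = x 0 * y 0 + x 1 * y 1 + x 2 * y 2 :=
  Fin.sum_univ_three _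

set_option maxHeartbeats 2000000 in
lemma sigmaL_S1 (w : Fin 2 → ℝ) (b : ℝ) :
    sigmaL (blk 0 0 w b)
      = {b} ∪ Set.Icc (max 0 ((b - euclNorm w)/2)) ((b + euclNorm w)/2) := by
  have hm0 : 0 ≤ euclNorm w := Real.sqrt_nonneg _
  have hm2 : (euclNorm w)^2 = w 0^2 + w 1^2 := by
    rw [enorm_eq]; exact Real.sq_sqrt (by positivity)
  set m := euclNorm w with hmdef
  ext l
  simp only [sigmaL, Set.mem_setOf_eq, Set.mem_union, Set.mem_singleton_iff, Set.mem_Icc]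
  constructor
  · rintro ⟨x, hx0, hxK, hyK, hd⟩
    rw [mem_cone] at hxK
    rw [S1_sub_mulVec, mem_cone] at hyK
    rw [S1_sub_mulVec, dot3] at hd
    simp only [Matrix.cons_val_zero, Matrix.cons_val_one, Matrix.head_cons,
      Matrix.cons_val_two, Matrix.tail_cons] at hyK hd
    set p := x 0; set q := x 1; set h := x 2
    set r := Real.sqrt (p^2 + q^2) with hrdef
    have hr0 : 0 ≤ r := Real.sqrt_nonneg _
    have hr2 : r^2 = p^2 + q^2 := Real.sq_sqrt (by positivity)
    have hy2 : Real.sqrt ((-(l*p))^2 + (-(l*q))^2) = |l| * r := by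
      have e : (-(l*p))^2 + (-(l*q))^2 = (|l| * r)^2 := by
        rw [mul_pow, sq_abs, hr2]; ring
      rw [e, Real.sqrt_sq (by positivity)]
    rw [hy2] at hyK
    have hdot : h * (w 0 * p + w 1 * q + b * h - l * h) = l * r^2 := by
      rw [hr2]; nlinarith [hd]
    rcases eq_or_lt_of_le hr0 with hr|hr
    · -- r = 0
      have hpq : p = 0 ∧ q = 0 := by constructor <;> nlinarith [hr2]
      have hh : h ≠ 0 := by
        intro hh; exact vec3_ne x hx0 ⟨hpq.1, hpq.2, hh⟩
      have hhpos : 0 < h := lt_of_le_of_ne (by rw [← hr] at hxK; linarith) (Ne.symm hh)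
      left
      have h5 := hdot
      rw [hpq.1, hpq.2, ← hr] at h5
      have h6 : (b - l) * h^2 = 0 := by nlinarith [h5]
      rcases mul_eq_zero.mp h6 with h7|h7
      · linarith
      · exact absurd h7 (by positivity)
    · -- r > 0
      have hhr : r ≤ h := hxK
      have hhpos : 0 < h := lt_of_lt_of_le hr hhr
      have hr2pos : 0 < r^2 := by positivity
      have hl0 : 0 ≤ l := by
        by_contra hneg
        push_neg at hneg
        have h1 : h * (w 0 * p + w 1 * q + b * h - l * h) < 0 := by nlinarith [hdot, hr2pos]
        have h2 : 0 ≤ w 0 * p + w 1 * q + b * h - l * h := le_trans (by positivity) hyK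
        nlinarith
      rw [abs_of_nonneg hl0] at hyK
      have key : l = 0 ∨ h = r := by
        have h1 : l * r * (h - r) ≤ 0 := by nlinarith [hyK, hdot]
        have h2 : 0 ≤ l * r * (h - r) := mul_nonneg (mul_nonneg hl0 hr0) (by linarith)
        have h3 : l * r * (h - r) = 0 := le_antisymm h1 h2
        rcases mul_eq_zero.mp h3 with h4|h4
        · rcases mul_eq_zero.mp h4 with h5|h5
          · exact Or.inl h5
          · exact absurd h5 (by linarith)
        · right; linarith
      have hCS : (w 0 * p + w 1 * q)^2 ≤ m^2 * r^2 := by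
        rw [hm2, hr2]; nlinarith [sq_nonneg (w 0 * q - w 1 * p)]
      rcases key with rfl|hb
      · right
        have hy20 : w 0 * p + w 1 * q + b * h = 0 := by nlinarith [hdot]
        have hrh : r^2 ≤ h^2 := by nlinarith
        have e : (w 0 * p + w 1 * q)^2 = b^2 * h^2 := by
          linear_combination (w 0 * p + w 1 * q - b * h) * hy20
        have hbh : b^2*h^2 ≤ m^2*h^2 := by nlinarith [hCS, e, hrh, sq_nonneg m]
        have hbm : b^2 ≤ m^2 := by nlinarith [hbh, mul_pos hhpos hhpos]
        have h1 : (b - m)/2 ≤ 0 := by nlinarith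
        have h2 : 0 ≤ (b + m)/2 := by nlinarith
        exact ⟨max_le le_rfl h1, h2⟩
      · right
        have hw : w 0 * p + w 1 * q = (2*l - b) * r := by
          rw [hb] at hdot; nlinarith [hdot]
        have habs : (2*l - b)^2 ≤ m^2 := by
          rw [hw] at hCS; nlinarith [hCS, hr2pos]
        have h1 : (b - m)/2 ≤ l := by nlinarith
        have h2 : l ≤ (b + m)/2 := by nlinarith
        exact ⟨max_le hl0 h1, h2⟩
  · rintro (rfl | ⟨hl1, hl2⟩)
    · refine ⟨![0,0,1], ?_, ?_, ?_, ?_⟩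
      · intro hc; have := congrFun hc 2; simp at this
      · rw [mem_cone]; norm_num; exact zero_le_one
      · rw [S1_sub_mulVec, mem_cone]
        norm_num; exact le_rfl
      · rw [S1_sub_mulVec, dot3]
        norm_num; exact Or.inr rfl
    · have hl0 : 0 ≤ l := le_trans (le_max_left _ _) hl1
      have hlb : (b - m)/2 ≤ l := le_trans (le_max_right _ _) hl1
      have hd2 : (2*l - b)^2 ≤ w 0^2 + w 1^2 := by rw [← hm2]; nlinarith
      obtain ⟨c, s, hcs, hdotw⟩ := exists_unit w (2*l - b) hd2
      refine ⟨![c,s,1], ?_, ?_, ?_, ?_⟩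
      · intro hc; have := congrFun hc 2; simp at this
      · rw [mem_cone]
        simp only [Matrix.cons_val_zero, Matrix.cons_val_one, Matrix.head_cons,
          Matrix.cons_val_two, Matrix.tail_cons]
        rw [hcs, Real.sqrt_one]
      · rw [S1_sub_mulVec, mem_cone]
        simp only [Matrix.cons_val_zero, Matrix.cons_val_one, Matrix.head_cons,
          Matrix.cons_val_two, Matrix.tail_cons]
        have e1 : (-(l*c))^2 + (-(l*s))^2 = l^2 := by nlinarith [hcs]
        rw [e1, Real.sqrt_sq hl0]
        nlinarith [hdotw]
      · rw [S1_sub_mulVec, dot3]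
        simp only [Matrix.cons_val_zero, Matrix.cons_val_one, Matrix.head_cons,
          Matrix.cons_val_two, Matrix.tail_cons]
        nlinarith [hcs, hdotw]

lemma sigmaL_shift (A : Matrix (Fin 3) (Fin 3) ℝ) (μ : ℝ) :
    sigmaL (μ • (1 : Matrix (Fin 3) (Fin 3) ℝ) + A) = (fun t => μ + t) '' sigmaL A := by
  have hmat : ∀ l : ℝ, μ • (1 : Matrix (Fin 3) (Fin 3) ℝ) + A - l • 1 = A - (l - μ) • 1 := by
    intro l; rw [sub_smul]; abel
  ext l
  simp only [sigmaL, Set.mem_setOf_eq, Set.mem_image]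
  constructor
  · rintro ⟨x, hx⟩
    refine ⟨l - μ, ⟨x, ?_⟩, by ring⟩
    unfold IsLEigenvector at hx ⊢
    rwa [hmat] at hx
  · rintro ⟨t, ⟨x, hx⟩, rfl⟩
    refine ⟨x, ?_⟩
    unfold IsLEigenvector at hx ⊢
    rw [hmat]
    simpa using hx

lemma blk_decomp (μ : ℝ) (w : Fin 2 → ℝ) (b : ℝ) :
    blk (μ • 1) 0 w b = μ • (1 : Matrix (Fin 3) (Fin 3) ℝ) + blk 0 0 w (b - μ) := by
  ext i j
  fin_cases i <;> fin_cases j <;>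
    simp [blk_ent, Matrix.one_apply] <;> norm_num

lemma sigmaL_muI (μ : ℝ) (w : Fin 2 → ℝ) (b : ℝ) :
    sigmaL (blk (μ • 1) 0 w b)
      = {b} ∪ Set.Icc (μ + max 0 ((b - μ - euclNorm w)/2)) (μ + (b - μ + euclNorm w)/2) := by
  rw [blk_decomp, sigmaL_shift, sigmaL_S1, Set.image_union, Set.image_singleton,
    Set.image_const_add_Icc]
  have h1 : μ + (b - μ) = b := by ring
  rw [h1]


set_option maxHeartbeats 1000000 in
lemma circle_zero_finite (α β γ δ ε : ℝ)
    (hne : ¬(α = 0 ∧ β = 0 ∧ γ = 0 ∧ δ = 0 ∧ ε = 0)) :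
    {p : ℝ × ℝ | p.1^2 + p.2^2 = 1 ∧
      α + β*p.1 + γ*p.2 + δ*(p.1*p.2) + ε*p.1^2 = 0}.Finite := by
  set a0 := α + β + ε with ha0
  set a1 := 2*(γ+δ) with ha1
  set a2 := 2*(α-ε) with ha2
  set a3 := 2*(γ-δ) with ha3
  set a4 := α-β+ε with ha4
  set P : Polynomial ℝ := C a0 + C a1 * X + C a2 * X^2 + C a3 * X^3 + C a4 * X^4 with hP
  have hco : P.coeff 0 = a0 ∧ P.coeff 1 = a1 ∧ P.coeff 2 = a2 ∧ P.coeff 3 = a3 ∧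
      P.coeff 4 = a4 := by
    rw [hP]
    refine ⟨?_, ?_, ?_, ?_, ?_⟩ <;>
      simp [coeff_add, coeff_C_mul, coeff_C, coeff_X_pow, coeff_X]
  have hPne : P ≠ 0 := by
    intro h
    rw [h] at hco
    simp only [Polynomial.coeff_zero] at hco
    obtain ⟨h0, h1, h2, h3, h4⟩ := hco
    exact hne ⟨by linarith, by linarith, by linarith, by linarith, by linarith⟩
  have hroots : {t : ℝ | P.IsRoot t}.Finite :=
    Set.not_infinite.mp (fun hI => hPne (P.eq_zero_of_infinite_isRoot hI))
  apply Set.Finite.subset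
    (Set.Finite.insert ((-1:ℝ), (0:ℝ))
      (hroots.image (fun t => ((1-t^2)/(1+t^2), 2*t/(1+t^2)))))
  rintro ⟨c, s⟩ ⟨hcs, hval⟩
  simp only [Set.mem_setOf_eq] at hcs hval
  by_cases hc : c = -1
  · subst hc
    have hs : s = 0 := by nlinarith
    subst hs
    exact Set.mem_insert _ _
  · have h1c : (1:ℝ) + c ≠ 0 := fun h => hc (by linarith)
    apply Set.mem_insert_of_mem
    obtain ⟨t, htdef⟩ : ∃ t : ℝ, t = s/(1+c) := ⟨_, rfl⟩
    have hts : s = t*(1+c) := by rw [htdef]; field_simp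
    have ht2 : t^2*(1+c) = 1-c := by
      have h2 : (t^2*(1+c))*(1+c) = (1-c)*(1+c) := by
        have e1 : (t*(1+c))^2 = s^2 := by rw [← hts]
        nlinarith [e1, hcs]
      exact mul_right_cancel₀ h1c h2
    refine ⟨t, ?_, ?_⟩
    · -- t is a root of P
      show P.IsRoot t
      have heval : P.eval t = a0 + a1*t + a2*t^2 + a3*t^3 + a4*t^4 := by
        rw [hP]; simp; try ring
      have key : (a0 + a1*t + a2*t^2 + a3*t^3 + a4*t^4)*(1+c)^2
          = 4*(α + β*c + γ*s + δ*(c*s) + ε*c^2) := by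
        rw [ha0, ha1, ha2, ha3, ha4]
        linear_combination
          ((2*(α-ε))*(1+c) + (2*(γ-δ))*t*(1+c) + (α-β+ε)*(t^2*(1+c)+(1-c))) * ht2
          + ((2*(γ-δ))*(1-c) + (2*(γ+δ))*(1+c) - 8*(γ + δ*c)) * hts
      have : P.eval t * (1+c)^2 = 0 := by rw [heval, key, hval]; ring
      rcases mul_eq_zero.mp this with h|h
      · exact h
      · exact absurd h (pow_ne_zero _ h1c)
    · -- the parametrization hits (c,s)
      have hden : (1:ℝ) + t^2 ≠ 0 := by positivity
      have g1 : (1-t^2)/(1+t^2) = c := by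
        rw [div_eq_iff hden]
        linear_combination -ht2
      have g2 : 2*t/(1+t^2) = s := by
        rw [div_eq_iff hden]
        linear_combination (1+t^2)*hts - t*ht2 - hts - (1+2*t^2)*hts
      simp [g1, g2]

lemma mulVec3 (M : Matrix (Fin (2+1)) (Fin (2+1)) ℝ) (x : Fin (2+1) → ℝ) (i : Fin (2+1)) :
    (M *ᵥ x) i = M i 0 * x 0 + M i 1 * x 1 + M i 2 * x 2 := by
  simp [Matrix.mulVec, dotProduct, Fin.sum_univ_three]

lemma compl_int (x y : Fin (2+1) → ℝ) (hxi : Real.sqrt (x 0^2 + x 1^2) < x 2)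
    (hyK : y ∈ lorentzCone 2) (hd : x ⬝ᵥ y = 0) : y = 0 := by
  rw [mem_cone] at hyK
  rw [dot3] at hd
  set r := Real.sqrt (x 0^2 + x 1^2) with hrdef
  set ρ := Real.sqrt (y 0^2 + y 1^2) with hρdef
  have hr0 : 0 ≤ r := Real.sqrt_nonneg _
  have hρ0 : 0 ≤ ρ := Real.sqrt_nonneg _
  have hr2 : r^2 = x 0^2 + x 1^2 := Real.sq_sqrt (by positivity)
  have hρ2 : ρ^2 = y 0^2 + y 1^2 := Real.sq_sqrt (by positivity)
  have hh0 : 0 < x 2 := lt_of_le_of_lt hr0 hxi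
  have hsq : (x 0*y 0 + x 1*y 1)^2 ≤ (r*ρ)^2 := by
    rw [mul_pow, hr2, hρ2]; nlinarith [sq_nonneg (x 0*y 1 - x 1*y 0)]
  have habs : |x 0*y 0 + x 1*y 1| ≤ r*ρ := by
    rw [← Real.sqrt_sq_eq_abs]
    calc Real.sqrt ((x 0*y 0 + x 1*y 1)^2) ≤ Real.sqrt ((r*ρ)^2) := Real.sqrt_le_sqrt hsq
      _ = r*ρ := Real.sqrt_sq (mul_nonneg hr0 hρ0)
  obtain ⟨hlow, hup⟩ := abs_le.mp habs
  have h2ρ : x 2 * y 2 ≤ r * ρ := by linarith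
  have h3 : x 2 * ρ ≤ x 2 * y 2 := mul_le_mul_of_nonneg_left hyK (le_of_lt hh0)
  have hρz : ρ = 0 := by nlinarith
  have hy0 : y 0 = 0 := by nlinarith [hρ2, hρz, sq_nonneg (y 1)]
  have hy1 : y 1 = 0 := by nlinarith [hρ2, hρz, sq_nonneg (y 0)]
  have hy2 : y 2 = 0 := by
    have : x 2 * y 2 = 0 := by rw [hy0, hy1] at hd; linarith
    rcases mul_eq_zero.mp this with h|h
    · linarith
    · exact h
  funext i; fin_cases i <;> assumption

lemma compl_bd (x y : Fin (2+1) → ℝ) (hrpos : 0 < Real.sqrt (x 0^2 + x 1^2))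
    (hxb : Real.sqrt (x 0^2 + x 1^2) = x 2) (hyK : y ∈ lorentzCone 2) (hd : x ⬝ᵥ y = 0) :
    0 ≤ y 2 ∧ x 2 * y 0 = -(x 0 * y 2) ∧ x 2 * y 1 = -(x 1 * y 2) := by
  rw [mem_cone] at hyK
  rw [dot3] at hd
  set r := Real.sqrt (x 0^2 + x 1^2) with hrdef
  set ρ := Real.sqrt (y 0^2 + y 1^2) with hρdef
  have hρ0 : 0 ≤ ρ := Real.sqrt_nonneg _
  have hr2 : r^2 = x 0^2 + x 1^2 := Real.sq_sqrt (by positivity)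
  have hρ2 : ρ^2 = y 0^2 + y 1^2 := Real.sq_sqrt (by positivity)
  have hsq : (x 0*y 0 + x 1*y 1)^2 ≤ (r*ρ)^2 := by
    rw [mul_pow, hr2, hρ2]; nlinarith [sq_nonneg (x 0*y 1 - x 1*y 0)]
  have habs : |x 0*y 0 + x 1*y 1| ≤ r*ρ := by
    rw [← Real.sqrt_sq_eq_abs]
    calc Real.sqrt ((x 0*y 0 + x 1*y 1)^2) ≤ Real.sqrt ((r*ρ)^2) := Real.sqrt_le_sqrt hsq
      _ = r*ρ := Real.sqrt_sq (mul_nonneg (le_of_lt hrpos) hρ0)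
  obtain ⟨hlow, hup⟩ := abs_le.mp habs
  -- x 2 = r
  have hs : x 0*y 0 + x 1*y 1 = -(r * y 2) := by rw [hxb]; linarith
  have hy2ρ : y 2 ≤ ρ := by
    have h1 : r * y 2 ≤ r * ρ := by nlinarith
    exact le_of_mul_le_mul_left h1 hrpos
  have hy2 : y 2 = ρ := le_antisymm hy2ρ hyK
  have hy2nn : 0 ≤ y 2 := by rw [hy2]; exact hρ0
  -- equality in Cauchy-Schwarz
  have lag : (x 0*y 0 + x 1*y 1)^2 + (x 0*y 1 - x 1*y 0)^2 = r^2*ρ^2 := by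
    rw [hr2, hρ2]; ring
  have hcross : x 0*y 1 - x 1*y 0 = 0 := by
    have hs2 : (x 0*y 0 + x 1*y 1)^2 = r^2*ρ^2 := by rw [hs, hy2]; ring
    have h1 : (x 0*y 1 - x 1*y 0)^2 = 0 := by linarith [lag, hs2]
    exact (pow_eq_zero_iff (by norm_num : 2 ≠ 0)).mp h1
  have e0 : r * (r * y 0) = r * (-(x 0 * y 2)) := by
    have h2 : r^2 * y 0 = x 0 * (x 0*y 0 + x 1*y 1) + x 1 * (x 1*y 0 - x 0*y 1) := by
      rw [hr2]; ring
    rw [hs] at h2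
    linear_combination h2 - x 1 * hcross
  have e1 : r * (r * y 1) = r * (-(x 1 * y 2)) := by
    have h2 : r^2 * y 1 = x 1 * (x 0*y 0 + x 1*y 1) + x 0 * (x 0*y 1 - x 1*y 0) := by
      rw [hr2]; ring
    rw [hs] at h2
    linear_combination h2 + x 0 * hcross
  refine ⟨hy2nn, ?_, ?_⟩
  · rw [← hxb]; exact mul_left_cancel₀ (ne_of_gt hrpos) e0
  · rw [← hxb]; exact mul_left_cancel₀ (ne_of_gt hrpos) e1

open Polynomial in
lemma cubic_coeff3 (c0 c1 c2 : ℝ) :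
    (C c0 + C c1 * X + C c2 * X^2 - X^3 : ℝ[X]).coeff 3 = -1 := by
  simp [coeff_add, coeff_sub, coeff_C_mul, coeff_C, coeff_X_pow]

set_option maxHeartbeats 2000000 in
lemma classify (B : Matrix (Fin 3) (Fin 3) ℝ) (hinf : (sigmaL B).Infinite) :
    ∃ (μ : ℝ) (wv : Fin 2 → ℝ) (bv : ℝ), B = blk (μ • 1) 0 wv bv := by
  by_cases hz : B 0 1 = 0 ∧ -(B 1 2) = 0 ∧ B 0 2 = 0 ∧ B 0 0 - B 1 1 = 0 ∧
      -(B 0 1 + B 1 0) = 0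
  · obtain ⟨h1, h2, h3, h4, h5⟩ := hz
    refine ⟨B 0 0, ![B 2 0, B 2 1], B 2 2, ?_⟩
    ext i j
    fin_cases i <;> fin_cases j <;>
      simp [blk_ent, Matrix.one_apply] <;> linarith
  · exfalso
    -- the determinant polynomial
    set Pd : Polynomial ℝ :=
      Polynomial.C (B 0 0*B 1 1*B 2 2 - B 0 0*B 1 2*B 2 1 - B 0 1*B 1 0*B 2 2
          + B 0 1*B 1 2*B 2 0 + B 0 2*B 1 0*B 2 1 - B 0 2*B 1 1*B 2 0)
        + Polynomial.C (-(B 0 0*B 1 1 - B 0 1*B 1 0 + B 0 0*B 2 2 - B 0 2*B 2 0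
          + B 1 1*B 2 2 - B 1 2*B 2 1)) * Polynomial.X
        + Polynomial.C (B 0 0 + B 1 1 + B 2 2) * Polynomial.X^2
        - Polynomial.X^3 with hPd
    have hPdne : Pd ≠ 0 := by
      intro h
      have hc3 : Pd.coeff 3 = -1 := by
        rw [hPd]; exact cubic_coeff3 _ _ _
      rw [h] at hc3
      simp at hc3
    have hdet : ∀ l : ℝ, (B - l • (1:Matrix (Fin 3) (Fin 3) ℝ)).det = Pd.eval l := by
      intro l
      rw [Matrix.det_fin_three, hPd]
      simp [Matrix.sub_apply, Matrix.smul_apply, Matrix.one_apply]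
      ring
    have hDfin : {l : ℝ | Pd.IsRoot l}.Finite :=
      Set.not_infinite.mp (fun hI => hPdne (Pd.eq_zero_of_infinite_isRoot hI))
    -- the circle set
    have hZfin := circle_zero_finite (B 0 1) (-(B 1 2)) (B 0 2) (B 0 0 - B 1 1)
      (-(B 0 1 + B 1 0)) hz
    set Zset := {p : ℝ × ℝ | p.1^2 + p.2^2 = 1 ∧
      B 0 1 + -(B 1 2)*p.1 + B 0 2*p.2 + (B 0 0 - B 1 1)*(p.1*p.2)
        + -(B 0 1 + B 1 0)*p.1^2 = 0} with hZ
    set Gfun : ℝ × ℝ → ℝ := fun cs =>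
      (B 0 0*cs.1^2 + (B 0 1 + B 1 0)*(cs.1*cs.2) + B 1 1*cs.2^2 + B 0 2*cs.1
        + B 1 2*cs.2 + B 2 0*cs.1 + B 2 1*cs.2 + B 2 2)/2 with hG
    -- spectrum is contained in a finite set
    have hsub : sigmaL B ⊆ {l : ℝ | Pd.IsRoot l} ∪ Gfun '' Zset := by
      rintro l ⟨x, hx0, hxK, hyK, hd⟩
      have hyc : ∀ i, ((B - l • (1:Matrix (Fin (2+1)) (Fin (2+1)) ℝ)) *ᵥ x) i
          = B i 0 * x 0 + B i 1 * x 1 + B i 2 * x 2 - l * x i := by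
        intro i
        rw [Matrix.sub_mulVec, Matrix.smul_mulVec, Matrix.one_mulVec]
        simp [mulVec3]
      rw [mem_cone] at hxK
      rcases eq_or_lt_of_le hxK with hb|hb
      · -- boundary case
        right
        have hr0 : 0 ≤ Real.sqrt (x 0^2 + x 1^2) := Real.sqrt_nonneg _
        have hr2 : (Real.sqrt (x 0^2 + x 1^2))^2 = x 0^2 + x 1^2 :=
          Real.sq_sqrt (by positivity)
        have hrpos : 0 < Real.sqrt (x 0^2 + x 1^2) := by
          rcases eq_or_lt_of_le hr0 with h0|h0
          · exfalso
            have hp : x 0 = 0 := by nlinarith [hr2]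
            have hq : x 1 = 0 := by nlinarith [hr2]
            have hh : x 2 = 0 := by rw [← hb, ← h0]
            exact vec3_ne x hx0 ⟨hp, hq, hh⟩
          · exact h0
        obtain ⟨hy2nn, e0, e1⟩ := compl_bd x _ hrpos hb hyK hd
        simp only [hyc] at e0 e1
        have hdd : x 0 * (B 0 0*x 0 + B 0 1*x 1 + B 0 2*x 2 - l*x 0)
            + x 1 * (B 1 0*x 0 + B 1 1*x 1 + B 1 2*x 2 - l*x 1)
            + x 2 * (B 2 0*x 0 + B 2 1*x 1 + B 2 2*x 2 - l*x 2) = 0 := by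
          rw [dot3] at hd
          simp only [hyc] at hd
          linarith [hd]
        set r := Real.sqrt (x 0^2 + x 1^2) with hrdef
        have hrh : r = x 2 := hb
        have hrne : r ≠ 0 := ne_of_gt hrpos
        have hr2ne : r^2 ≠ 0 := pow_ne_zero 2 hrne
        rw [← hrh] at e0 e1 hdd
        obtain ⟨c, hc⟩ : ∃ c : ℝ, c = x 0 / r := ⟨_, rfl⟩
        obtain ⟨s, hs⟩ : ∃ s : ℝ, s = x 1 / r := ⟨_, rfl⟩
        have hcr : c * r = x 0 := by rw [hc]; field_simp
        have hsr : s * r = x 1 := by rw [hs]; field_simp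
        have hcs : c^2 + s^2 = 1 := by
          have h2 : (c^2 + s^2) * r^2 = 1 * r^2 := by
            linear_combination (c*r + x 0)*hcr + (s*r + x 1)*hsr - hr2
          exact mul_right_cancel₀ hr2ne h2
        have key : x 1 * (B 0 0*x 0 + B 0 1*x 1 + B 0 2*r)
            = x 0 * (B 1 0*x 0 + B 1 1*x 1 + B 1 2*r) := by
          have h2 : r * (x 1 * (B 0 0*x 0 + B 0 1*x 1 + B 0 2*r))
              = r * (x 0 * (B 1 0*x 0 + B 1 1*x 1 + B 1 2*r)) := by
            linear_combination x 1 * e0 - x 0 * e1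
          exact mul_left_cancel₀ hrne h2
        have hval : B 0 1 + -(B 1 2)*c + B 0 2*s + (B 0 0 - B 1 1)*(c*s)
            + -(B 0 1 + B 1 0)*c^2 = 0 := by
          have h2 : (B 0 1 + -(B 1 2)*c + B 0 2*s + (B 0 0 - B 1 1)*(c*s)
              + -(B 0 1 + B 1 0)*c^2) * r^2 = 0 * r^2 := by
            linear_combination key + B 0 1 * hr2
              + (-(B 1 2)*r + (B 0 0 - B 1 1)*(s*r) + (-(B 0 1 + B 1 0))*(c*r + x 0)) * hcr
              + (B 0 2*r + (B 0 0 - B 1 1)*(x 0)) * hsr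
          exact mul_right_cancel₀ hr2ne h2
        have hsum : x 0*(B 0 0*x 0 + B 0 1*x 1 + B 0 2*r)
            + x 1*(B 1 0*x 0 + B 1 1*x 1 + B 1 2*r)
            + r*(B 2 0*x 0 + B 2 1*x 1 + B 2 2*r) = 2*l*r^2 := by
          linear_combination hdd - l*hr2
        refine ⟨(c, s), ⟨hcs, hval⟩, ?_⟩
        show (B 0 0*c^2 + (B 0 1 + B 1 0)*(c*s) + B 1 1*s^2 + B 0 2*c
          + B 1 2*s + B 2 0*c + B 2 1*s + B 2 2)/2 = l
        rw [div_eq_iff (two_ne_zero)]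
        have h2 : (B 0 0*c^2 + (B 0 1 + B 1 0)*(c*s) + B 1 1*s^2 + B 0 2*c
            + B 1 2*s + B 2 0*c + B 2 1*s + B 2 2) * r^2 = (l*2) * r^2 := by
          linear_combination hsum
            + (B 0 0*(c*r + x 0) + (B 0 1 + B 1 0)*(s*r) + B 0 2*r + B 2 0*r) * hcr
            + ((B 0 1 + B 1 0)*(x 0) + B 1 1*(s*r + x 1) + B 1 2*r + B 2 1*r) * hsr
        exact mul_right_cancel₀ hr2ne h2
      · -- interior case
        left
        have hy0 : (B - l • (1:Matrix (Fin (2+1)) (Fin (2+1)) ℝ)) *ᵥ x = 0 :=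
          compl_int x _ hb hyK hd
        have hdet0 : (B - l • (1:Matrix (Fin (2+1)) (Fin (2+1)) ℝ)).det = 0 :=
          (Matrix.exists_mulVec_eq_zero_iff).mp ⟨x, hx0, hy0⟩
        show Pd.IsRoot l
        rw [Polynomial.IsRoot, ← hdet, hdet0]
    exact hinf (Set.Finite.subset (hDfin.union (hZfin.image Gfun)) hsub)

lemma three_distinct {S b a : ℝ} (hLR : S < b ∨ True) : True := trivial

lemma interval_match (L R L' R' b a : ℝ) (hLR : L < R)
    (h : ({b} ∪ Set.Icc L' R' : Set ℝ) = {a} ∪ Set.Icc L R) :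
    R' = R ∧ L' = L ∧ (b = a ∨ b ∈ Set.Icc L R) ∧ (a = b ∨ a ∈ Set.Icc L R) := by
  have hIcc : Set.Icc L R ⊆ ({b} ∪ Set.Icc L' R' : Set ℝ) := by
    rw [h]; exact Set.subset_union_right
  have hIcc' : Set.Icc L' R' ⊆ ({a} ∪ Set.Icc L R : Set ℝ) := by
    rw [← h]; exact Set.subset_union_right
  have hbmem : b ∈ ({a} ∪ Set.Icc L R : Set ℝ) := by
    rw [← h]; exact Set.mem_union_left _ rfl
  -- Icc L' R' is nonempty
  have hne : L' ≤ R' := by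
    by_contra hc
    push_neg at hc
    have hempty : Set.Icc L' R' = (∅ : Set ℝ) := Set.Icc_eq_empty (not_le.mpr hc)
    rw [hempty] at h
    have hL : L ∈ ({b} : Set ℝ) ∪ ∅ := by
      rw [h]; exact Set.mem_union_right _ ⟨le_refl L, le_of_lt hLR⟩
    have hR : R ∈ ({b} : Set ℝ) ∪ ∅ := by
      rw [h]; exact Set.mem_union_right _ ⟨le_of_lt hLR, le_refl R⟩
    simp only [Set.union_empty, Set.mem_singleton_iff] at hL hR
    rw [hL, hR] at hLR; exact lt_irrefl _ hLR
  -- three points pigeonhole helper for the degenerate case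
  have hthree : ¬ (∀ z ∈ Set.Icc L R, z = b ∨ z = a) := by
    intro hall
    have h1 := hall L ⟨le_refl L, le_of_lt hLR⟩
    have h2 := hall ((L+R)/2) ⟨by linarith, by linarith⟩
    have h3 := hall R ⟨le_of_lt hLR, le_refl R⟩
    rcases h1 with h1|h1 <;> rcases h2 with h2|h2 <;> rcases h3 with h3|h3 <;> linarith
  -- R ≤ R'
  have hRR' : R ≤ R' := by
    by_contra hc
    push_neg at hc
    set u := max L R' with hu
    have hult : u < R := max_lt hLR hc
    have hx1 : (u+R)/2 ∈ Set.Icc L R := ⟨by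
        have : L ≤ u := le_max_left _ _
        linarith, by linarith⟩
    have hx2 : (u+3*R)/4 ∈ Set.Icc L R := ⟨by
        have : L ≤ u := le_max_left _ _
        linarith, by linarith⟩
    have hb1 := hIcc hx1
    have hb2 := hIcc hx2
    have hR' : R' ≤ u := le_max_right _ _
    rcases hb1 with hb1|hb1
    · rcases hb2 with hb2|hb2
      · simp only [Set.mem_singleton_iff] at hb1 hb2; linarith [hb1, hb2]
      · exact absurd hb2.2 (by push_neg; linarith)
    · exact absurd hb1.2 (by push_neg; linarith)
  -- L' ≤ L
  have hLL' : L' ≤ L := by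
    by_contra hc
    push_neg at hc
    set u := min R L' with hu
    have hult : L < u := lt_min hLR hc
    have hx1 : (3*L+u)/4 ∈ Set.Icc L R := ⟨by linarith, by
        have : u ≤ R := min_le_left _ _
        linarith⟩
    have hx2 : (L+u)/2 ∈ Set.Icc L R := ⟨by linarith, by
        have : u ≤ R := min_le_left _ _
        linarith⟩
    have hb1 := hIcc hx1
    have hb2 := hIcc hx2
    have hL' : u ≤ L' := min_le_right _ _
    rcases hb1 with hb1|hb1
    · rcases hb2 with hb2|hb2
      · simp only [Set.mem_singleton_iff] at hb1 hb2; linarith [hb1, hb2]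
      · exact absurd hb2.1 (by push_neg; linarith)
    · exact absurd hb1.1 (by push_neg; linarith)
  -- R' ≤ R
  have hR'R : R' ≤ R := by
    by_contra hc
    push_neg at hc
    -- R' = a necessarily
    rcases hIcc' ⟨hne, le_refl R'⟩ with ha'|ha'
    · -- R' = a > R; show Icc' must be {a}
      simp only [Set.mem_singleton_iff] at ha'
      have hdeg : L' = R' := by
        by_contra hL'R'
        have hL'lt : L' < R' := lt_of_le_of_ne hne hL'R'
        set u := max R L' with hu
        have hult : u < R' := max_lt hc (lt_of_le_of_lt hLL' (lt_of_lt_of_le hLR hRR'))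
        have hx : (u+R')/2 ∈ Set.Icc L' R' := ⟨by
            have : L' ≤ u := le_max_right _ _
            linarith, by linarith⟩
        rcases hIcc' hx with hxx|hxx
        · simp only [Set.mem_singleton_iff] at hxx
          rw [← ha'] at hxx; linarith
        · have : u < (u+R')/2 := by linarith
          have hRu : R ≤ u := le_max_left _ _
          exact absurd hxx.2 (by push_neg; linarith)
      -- then everything in Icc L R is b or a
      apply hthree
      intro z hz
      rcases hIcc hz with hzz|hzz
      · exact Or.inl hzz
      · right
        rw [← hdeg, Set.Icc_self] at hzz
        simp only [Set.mem_singleton_iff] at hzz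
        rw [hzz, hdeg]
        exact ha'
      -- done
    · exact absurd ha'.2 (by push_neg; exact hc)
  -- L ≤ L'
  have hL'L : L ≤ L' := by
    by_contra hc
    push_neg at hc
    rcases hIcc' ⟨le_refl L', hne⟩ with ha'|ha'
    · simp only [Set.mem_singleton_iff] at ha'
      have hdeg : L' = R' := by
        by_contra hL'R'
        have hL'lt : L' < R' := lt_of_le_of_ne hne hL'R'
        set u := min L R' with hu
        have hult : L' < u := lt_min hc (lt_of_lt_of_le (lt_of_lt_of_le hc (le_of_lt hLR)) (le_trans (le_refl R) hRR'))
        have hx : (L'+u)/2 ∈ Set.Icc L' R' := ⟨by linarith, by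
            have : u ≤ R' := min_le_right _ _
            linarith⟩
        rcases hIcc' hx with hxx|hxx
        · simp only [Set.mem_singleton_iff] at hxx
          rw [← ha'] at hxx; linarith
        · have hLu : u ≤ L := min_le_left _ _
          exact absurd hxx.1 (by push_neg; linarith)
      apply hthree
      intro z hz
      rcases hIcc hz with hzz|hzz
      · exact Or.inl hzz
      · right
        rw [← hdeg, Set.Icc_self] at hzz
        simp only [Set.mem_singleton_iff] at hzz
        rw [hzz]
        exact ha'
    · exact absurd ha'.1 (by push_neg; exact hc)
  have hR : R' = R := le_antisymm hR'R hRR'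
  have hL : L' = L := le_antisymm hLL' hL'L
  refine ⟨hR, hL, ?_, ?_⟩
  · rcases hbmem with hb|hb
    · exact Or.inl hb
    · exact Or.inr hb
  · have : a ∈ ({b} ∪ Set.Icc L' R' : Set ℝ) := by rw [h]; exact Set.mem_union_left _ rfl
    rcases this with ha'|ha'
    · exact Or.inl ha'
    · right; rw [hL, hR] at ha'; exact ha'


theorem image_of_S1_infinite_spectrum
    (φ : Matrix (Fin 3) (Fin 3) ℝ →ₗ[ℝ] Matrix (Fin 3) (Fin 3) ℝ)
    (hφ : ∀ A, sigmaL (φ A) = sigmaL A)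
    (v : Fin 2 → ℝ) (a : ℝ) (hv : v ≠ 0) (ha : 0 < a + euclNorm v) :
    (∃ w : Fin 2 → ℝ, euclNorm w = euclNorm v ∧ φ (blk 0 0 v a) = blk 0 0 w a) ∨
    ((∃ w : Fin 2 → ℝ, (a + euclNorm v) / 2 ≤ euclNorm w ∧ euclNorm w ≤ a + euclNorm v ∧
        φ (blk 0 0 v a) = blk 0 0 w (a + euclNorm v - euclNorm w)) ∧
      a - euclNorm v ≤ 0 ∧ 0 ≤ a) := by
  have hnpos : 0 < euclNorm v := by
    rw [enorm_eq]
    apply Real.sqrt_pos.mpr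
    obtain ⟨i, hi⟩ := Function.ne_iff.mp hv
    fin_cases i
    · simp only [Pi.zero_apply] at hi; positivity
    · simp only [Pi.zero_apply] at hi; positivity
  set n := euclNorm v with hndef
  have hSA : sigmaL (blk 0 0 v a) = {a} ∪ Set.Icc (max 0 ((a - n)/2)) ((a + n)/2) :=
    sigmaL_S1 v a
  have hLlt : max 0 ((a - n)/2) < (a + n)/2 := max_lt (by linarith) (by linarith)
  have hinf : (sigmaL (φ (blk 0 0 v a))).Infinite := by
    rw [hφ, hSA]
    exact Set.Infinite.mono Set.subset_union_right (Set.Icc_infinite hLlt)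
  obtain ⟨μ, w, b, hB⟩ := classify _ hinf
  set m := euclNorm w with hmdef
  have hm0 : 0 ≤ m := Real.sqrt_nonneg _
  have heq : ({b} ∪ Set.Icc (μ + max 0 ((b - μ - m)/2)) (μ + (b - μ + m)/2) : Set ℝ)
      = {a} ∪ Set.Icc (max 0 ((a - n)/2)) ((a + n)/2) := by
    rw [← sigmaL_muI, ← hB, hφ, hSA]
  obtain ⟨hR, hL, hbmem, hamem⟩ := interval_match _ _ _ _ b a hLlt heq
  have hE1 : μ + b + m = a + n := by linarith [hR]
  by_cases hba : b = a
  · -- case (i)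
    left
    have e : b - μ - m = a - n := by rw [hba] at hE1; linarith
    have hE2 := hL
    rw [e] at hE2
    have hμ0 : μ = 0 := by linarith [hE2]
    have hmn : m = n := by linarith
    exact ⟨w, hmn, by rw [hB, hμ0, hba, zero_smul]⟩
  · -- case (ii)
    right
    have haIcc : a ∈ Set.Icc (max 0 ((a - n)/2)) ((a + n)/2) := by
      rcases hamem with h|h
      · exact absurd h.symm hba
      · exact h
    have ha0 : 0 ≤ a := le_trans (le_max_left _ _) haIcc.1
    have han : a ≤ n := by have := haIcc.2; linarith
    have hbIcc : b ∈ Set.Icc (max 0 ((a - n)/2)) ((a + n)/2) := by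
      rcases hbmem with h|h
      · exact absurd h hba
      · exact h
    have hb0 : 0 ≤ b := le_trans (le_max_left _ _) hbIcc.1
    have hbR : b ≤ (a + n)/2 := hbIcc.2
    have hLzero : max 0 ((a - n)/2) = 0 := max_eq_left (by linarith)
    have hE2 : μ + max 0 ((b - μ - m)/2) = 0 := by rw [hL, hLzero]
    have hmax0 : 0 ≤ max 0 ((b - μ - m)/2) := le_max_left _ _
    have hμle : μ ≤ 0 := by linarith
    have hμ0 : μ = 0 := by
      rcases le_or_gt ((b - μ - m)/2) 0 with hcase|hcase
      · rw [max_eq_left hcase] at hE2; linarith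
      · rw [max_eq_right (le_of_lt hcase)] at hE2
        -- m = b + μ, and 2m = a+n, b = m - μ ≤ (a+n)/2 = m
        have hmval : m = b + μ := by linarith
        have h2m : 2*m = a + n := by linarith
        linarith
    have hbval : b = a + n - m := by linarith
    have hm1 : (a + n)/2 ≤ m := by linarith
    have hm2 : m ≤ a + n := by linarith
    refine ⟨⟨w, hm1, hm2, ?_⟩, by linarith, ha0⟩
    rw [hB, hμ0, zero_smul, hbval]
end
end

section
/- Let φ : M₃ → M₃ be a linear preserver of the Lorentz spectrum with associated orthogonal matrix Q. Then for every Ã ∈ M₂ there exists C̃ ∈ M₂ such that φ([Ã 0; 0ᵀ 0]) = [C̃ 0; 0ᵀ 0], and for every u ∈ ℝ² there exists B̃ ∈ M₂ such that φ([0 u; 0ᵀ 0]) = [B̃ Qu; 0ᵀ 0]. -/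
open Matrix

noncomputable section

section Blk
variable (X : Matrix (Fin 2) (Fin 2) ℝ) (u v : Fin 2 → ℝ) (a : ℝ)
@[simp] lemma blk00 : blk X u v a 0 0 = X 0 0 := by simp [blk, Fin.snoc]
@[simp] lemma blk01 : blk X u v a 0 1 = X 0 1 := by simp [blk, Fin.snoc]
@[simp] lemma blk02 : blk X u v a 0 2 = u 0 := by simp [blk, Fin.snoc]
@[simp] lemma blk10 : blk X u v a 1 0 = X 1 0 := by simp [blk, Fin.snoc]
@[simp] lemma blk11 : blk X u v a 1 1 = X 1 1 := by simp [blk, Fin.snoc]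
@[simp] lemma blk12 : blk X u v a 1 2 = u 1 := by simp [blk, Fin.snoc]
@[simp] lemma blk20 : blk X u v a 2 0 = v 0 := by simp [blk, Fin.snoc]
@[simp] lemma blk21 : blk X u v a 2 1 = v 1 := by simp [blk, Fin.snoc]
@[simp] lemma blk22 : blk X u v a 2 2 = a := by simp [blk, Fin.snoc]
end Blk

lemma fin3_cases (i : Fin 3) : i = 0 ∨ i = 1 ∨ i = 2 := by omega

lemma blk_add (X X' : Matrix (Fin 2) (Fin 2) ℝ) (u u' v v' : Fin 2 → ℝ) (a a' : ℝ) :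
    blk X u v a + blk X' u' v' a' = blk (X + X') (u + u') (v + v') (a + a') := by
  ext i j
  rcases fin3_cases i with rfl | rfl | rfl <;> rcases fin3_cases j with rfl | rfl | rfl <;>
    simp [Matrix.add_apply]

lemma blk_smul (t : ℝ) (X : Matrix (Fin 2) (Fin 2) ℝ) (u v : Fin 2 → ℝ) (a : ℝ) :
    t • blk X u v a = blk (t • X) (t • u) (t • v) (t * a) := by
  ext i j
  rcases fin3_cases i with rfl | rfl | rfl <;> rcases fin3_cases j with rfl | rfl | rfl <;>
    simp [Matrix.smul_apply]

lemma blk_zero : blk 0 0 0 0 = 0 := by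
  ext i j
  rcases fin3_cases i with rfl | rfl | rfl <;> rcases fin3_cases j with rfl | rfl | rfl <;>
    simp

lemma eq_blk (M : Matrix (Fin 3) (Fin 3) ℝ) :
    M = blk (Matrix.of ![![M 0 0, M 0 1], ![M 1 0, M 1 1]]) ![M 0 2, M 1 2] ![M 2 0, M 2 1] (M 2 2) := by
  ext i j
  rcases fin3_cases i with rfl | rfl | rfl <;> rcases fin3_cases j with rfl | rfl | rfl <;>
    simp

lemma mem_cone_iff (x : Fin 3 → ℝ) : x ∈ lorentzCone 2 ↔ x 0^2 + x 1^2 ≤ x 2^2 ∧ 0 ≤ x 2 := by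
  unfold lorentzCone euclNorm
  rw [Set.mem_setOf_eq, Fin.sum_univ_two]
  show Real.sqrt (x 0 ^2 + x 1 ^2) ≤ x 2 ↔ _
  constructor
  · intro h
    have h0 : (0:ℝ) ≤ x 2 := le_trans (Real.sqrt_nonneg _) h
    refine ⟨?_, h0⟩
    have := Real.sq_sqrt (by positivity : (0:ℝ) ≤ x 0^2 + x 1^2)
    nlinarith [Real.sqrt_nonneg (x 0^2 + x 1^2)]
  · rintro ⟨h1, h2⟩
    have : Real.sqrt (x 0^2 + x 1^2) ≤ Real.sqrt (x 2^2) := Real.sqrt_le_sqrt h1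
    rwa [Real.sqrt_sq h2] at this

lemma mem_sigmaL_iff (M : Matrix (Fin 3) (Fin 3) ℝ) (l : ℝ) :
    l ∈ sigmaL M ↔ ∃ x : Fin 3 → ℝ, x ≠ 0 ∧
      (x 0^2 + x 1^2 ≤ x 2^2 ∧ 0 ≤ x 2) ∧
      (((M 0 0 - l)*x 0 + M 0 1*x 1 + M 0 2*x 2)^2 + (M 1 0*x 0 + (M 1 1 - l)*x 1 + M 1 2*x 2)^2
        ≤ (M 2 0*x 0 + M 2 1*x 1 + (M 2 2 - l)*x 2)^2 ∧ 0 ≤ M 2 0*x 0 + M 2 1*x 1 + (M 2 2 - l)*x 2) ∧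
      (x 0*((M 0 0 - l)*x 0 + M 0 1*x 1 + M 0 2*x 2) + x 1*(M 1 0*x 0 + (M 1 1 - l)*x 1 + M 1 2*x 2)
        + x 2*(M 2 0*x 0 + M 2 1*x 1 + (M 2 2 - l)*x 2) = 0) := by
  unfold sigmaL IsLEigenvector
  rw [Set.mem_setOf_eq]
  have hmv : ∀ x : Fin 3 → ℝ, (M - l • 1) *ᵥ x =
      ![(M 0 0 - l)*x 0 + M 0 1*x 1 + M 0 2*x 2,
        M 1 0*x 0 + (M 1 1 - l)*x 1 + M 1 2*x 2,
        M 2 0*x 0 + M 2 1*x 1 + (M 2 2 - l)*x 2] := by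
    intro x
    funext i
    rcases fin3_cases i with rfl | rfl | rfl <;>
      simp [Matrix.mulVec, dotProduct, Fin.sum_univ_three, Matrix.sub_apply,
        Matrix.smul_apply, Matrix.one_apply] <;> ring
  constructor
  · rintro ⟨x, hx0, hxK, hyK, hd⟩
    rw [hmv x] at hyK hd
    rw [mem_cone_iff] at hxK hyK
    refine ⟨x, hx0, hxK, by simpa using hyK, ?_⟩
    simpa [dotProduct, Fin.sum_univ_three] using hd
  · rintro ⟨x, hx0, hxK, hyK, hd⟩
    refine ⟨x, hx0, (mem_cone_iff x).2 hxK, ?_, ?_⟩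
    · rw [hmv x, mem_cone_iff]; simpa using hyK
    · rw [hmv x]; simpa [dotProduct, Fin.sum_univ_three] using hd

lemma mem_sigmaL_blk (X : Matrix (Fin 2) (Fin 2) ℝ) (u v : Fin 2 → ℝ) (a l : ℝ) :
    l ∈ sigmaL (blk X u v a) ↔ ∃ x : Fin 3 → ℝ, x ≠ 0 ∧
      (x 0^2 + x 1^2 ≤ x 2^2 ∧ 0 ≤ x 2) ∧
      (((X 0 0 - l)*x 0 + X 0 1*x 1 + u 0*x 2)^2 + (X 1 0*x 0 + (X 1 1 - l)*x 1 + u 1*x 2)^2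
        ≤ (v 0*x 0 + v 1*x 1 + (a - l)*x 2)^2 ∧ 0 ≤ v 0*x 0 + v 1*x 1 + (a - l)*x 2) ∧
      (x 0*((X 0 0 - l)*x 0 + X 0 1*x 1 + u 0*x 2) + x 1*(X 1 0*x 0 + (X 1 1 - l)*x 1 + u 1*x 2)
        + x 2*(v 0*x 0 + v 1*x 1 + (a - l)*x 2) = 0) := by
  rw [mem_sigmaL_iff]
  simp only [blk00, blk01, blk02, blk10, blk11, blk12, blk20, blk21, blk22]

lemma mem_of_eig (X : Matrix (Fin 2) (Fin 2) ℝ) (u v : Fin 2 → ℝ) (l ξ0 ξ1 : ℝ)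
    (h0 : X 0 0 * ξ0 + X 0 1 * ξ1 + u 0 = l * ξ0)
    (h1 : X 1 0 * ξ0 + X 1 1 * ξ1 + u 1 = l * ξ1)
    (hn : ξ0^2 + ξ1^2 ≤ 1) :
    l ∈ sigmaL (blk X u v (l - (v 0 * ξ0 + v 1 * ξ1))) := by
  rw [mem_sigmaL_blk]
  refine ⟨![ξ0, ξ1, 1], ?_, ?_, ?_, ?_⟩
  · intro h; have := congrFun h 2; simp at this
  · simp; linarith
  · have hv0 : (![ξ0, ξ1, (1:ℝ)]) 0 = ξ0 := rfl
    have hv1 : (![ξ0, ξ1, (1:ℝ)]) 1 = ξ1 := rfl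
    have hv2 : (![ξ0, ξ1, (1:ℝ)]) 2 = 1 := rfl
    rw [hv0, hv1, hv2]
    constructor
    · nlinarith [h0, h1]
    · nlinarith [h0, h1]
  · have hv0 : (![ξ0, ξ1, (1:ℝ)]) 0 = ξ0 := rfl
    have hv1 : (![ξ0, ξ1, (1:ℝ)]) 1 = ξ1 := rfl
    have hv2 : (![ξ0, ξ1, (1:ℝ)]) 2 = 1 := rfl
    rw [hv0, hv1, hv2]
    linear_combination ξ0*h0 + ξ1*h1

lemma bnd_aux (c p q m : ℝ) (hp : |p| ≤ m) (hq : |q| ≤ m) : c*(p*q) ≤ |c| * (m*m) := by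
  have h1 : c*(p*q) ≤ |c*(p*q)| := le_abs_self _
  have h2 : |c*(p*q)| = |c| * (|p| * |q|) := by rw [abs_mul, abs_mul]
  have h3 : |p| * |q| ≤ m*m := mul_le_mul hp hq (abs_nonneg q) (le_trans (abs_nonneg p) hp)
  nlinarith [abs_nonneg c]

set_option maxHeartbeats 2000000 in
lemma ext_lemma (C : Matrix (Fin 2) (Fin 2) ℝ) (w v : Fin 2 → ℝ) (a l : ℝ)
    (hl : l ∈ sigmaL (blk C w v a))
    (hsize : |C 0 0| + |C 0 1| + |C 1 0| + |C 1 1| + |w 0| + |w 1| + |v 0| + |v 1| + a < 2*l) :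
    ∃ ξ0 ξ1 η : ℝ, 0 < η ∧ ξ0^2 + ξ1^2 < η^2 ∧
      C 0 0*ξ0 + C 0 1*ξ1 + w 0*η = l*ξ0 ∧
      C 1 0*ξ0 + C 1 1*ξ1 + w 1*η = l*ξ1 ∧
      v 0*ξ0 + v 1*ξ1 + a*η = l*η := by
  rw [mem_sigmaL_blk] at hl
  obtain ⟨x, hx0, ⟨hK1, hK2⟩, ⟨hy1, hy2⟩, hd⟩ := hl
  have hne : ¬ (x 0 = 0 ∧ x 1 = 0 ∧ x 2 = 0) := by
    rintro ⟨e0, e1, e2⟩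
    apply hx0
    funext i
    rcases fin3_cases i with rfl | rfl | rfl <;> simp [e0, e1, e2]
  clear hx0
  set p := x 0 with hp
  set q := x 1 with hq
  set r := x 2 with hr
  clear_value p q r
  clear hp hq hr
  -- abbreviations for the three components of y
  obtain ⟨y0, hy0def⟩ : ∃ t, (C 0 0 - l)*p + C 0 1*q + w 0*r = t := ⟨_, rfl⟩
  obtain ⟨y1, hy1def⟩ : ∃ t, C 1 0*p + (C 1 1 - l)*q + w 1*r = t := ⟨_, rfl⟩
  obtain ⟨y2, hy2def⟩ : ∃ t, v 0*p + v 1*q + (a - l)*r = t := ⟨_, rfl⟩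
  simp only [hy0def, hy1def, hy2def] at hy1 hy2 hd
  have hrpos : 0 < r := by
    rcases lt_or_eq_of_le hK2 with h | h
    · exact h
    · exfalso
      have h0 : p ^ 2 = 0 := le_antisymm (by nlinarith [sq_nonneg q]) (sq_nonneg _)
      have h1 : q ^ 2 = 0 := le_antisymm (by nlinarith [sq_nonneg p]) (sq_nonneg _)
      exact hne ⟨sq_eq_zero_iff.mp h0, sq_eq_zero_iff.mp h1, h.symm⟩
  rcases lt_or_eq_of_le hK1 with hint | hbd
  · -- interior: y = 0
    have hcs : (p*y0 + q*y1)^2 ≤ (p^2 + q^2)*(y0^2 + y1^2) := by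
      nlinarith [sq_nonneg (p*y1 - q*y0)]
    have hdsq : (r * y2)^2 = (p*y0 + q*y1)^2 := by
      rw [show r * y2 = -(p*y0 + q*y1) by linarith]; ring
    have hmix : 0 ≤ (p^2 + q^2) * (y2^2 - (y0^2+y1^2)) :=
      mul_nonneg (by positivity) (by linarith)
    have hy2sq : y2^2 ≤ 0 := by
      by_contra hcon
      push_neg at hcon
      have hprod := mul_pos hcon (show (0:ℝ) < r^2 - (p^2 + q^2) by linarith)
      nlinarith [hdsq, hcs, hmix, hprod]
    have hy2z : y2 = 0 := sq_eq_zero_iff.mp (le_antisymm hy2sq (sq_nonneg _))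
    have hy0z : y0 = 0 := by
      have : y0^2 ≤ 0 := by nlinarith [sq_nonneg y1]
      exact sq_eq_zero_iff.mp (le_antisymm this (sq_nonneg _))
    have hy1z : y1 = 0 := by
      have : y1^2 ≤ 0 := by nlinarith [sq_nonneg y0]
      exact sq_eq_zero_iff.mp (le_antisymm this (sq_nonneg _))
    have e0 : C 0 0*p + C 0 1*q + w 0*r = l*p := by
      rw [hy0z] at hy0def; linarith
    have e1 : C 1 0*p + C 1 1*q + w 1*r = l*q := by
      rw [hy1z] at hy1def; linarith
    have e2 : v 0*p + v 1*q + a*r = l*r := by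
      rw [hy2z] at hy2def; linarith
    exact ⟨p, q, r, hrpos, hint, e0, e1, e2⟩
  · -- boundary: contradiction with size bound
    exfalso
    have habs0 : |p| ≤ r := by rw [abs_le]; constructor <;> nlinarith
    have habs1 : |q| ≤ r := by rw [abs_le]; constructor <;> nlinarith
    have habs2 : |r| ≤ r := by rw [abs_of_nonneg hK2]
    have hquad : C 0 0*(p*p) + C 0 1*(p*q) + w 0*(p*r)
        + C 1 0*(q*p) + C 1 1*(q*q) + w 1*(q*r)
        + v 0*(r*p) + v 1*(r*q) + a*(r*r) = l*(p^2 + q^2 + r^2) := by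
      linear_combination hd + p*hy0def + q*hy1def + r*hy2def
    have b1 := bnd_aux (C 0 0) p p r habs0 habs0
    have b2 := bnd_aux (C 0 1) p q r habs0 habs1
    have b3 := bnd_aux (w 0) p r r habs0 habs2
    have b4 := bnd_aux (C 1 0) q p r habs1 habs0
    have b5 := bnd_aux (C 1 1) q q r habs1 habs1
    have b6 := bnd_aux (w 1) q r r habs1 habs2
    have b7 := bnd_aux (v 0) r p r habs2 habs0
    have b8 := bnd_aux (v 1) r q r habs2 habs1
    have hrr : 0 < r*r := mul_pos hrpos hrpos
    have h2 : l*(p^2 + q^2 + r^2) = 2*l*(r*r) := by linear_combination l*hbd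
    nlinarith [h2, mul_lt_mul_of_pos_right hsize hrr]

-- determinant lower bound
lemma det_ge (y00 y01 y10 y11 l : ℝ) (hl : 1 + (|y00|+|y01|+|y10|+|y11|) ≤ l) :
    1 ≤ (l - y00)*(l - y11) - y01*y10 := by
  have h1 : 1 + |y01| + |y10| + |y11| ≤ l - y00 := by
    have := le_abs_self y00; linarith
  have h2 : 1 + |y00| + |y01| + |y10| ≤ l - y11 := by
    have := le_abs_self y11; linarith
  have hp1 : (0:ℝ) ≤ 1 + |y01| + |y10| + |y11| := by positivity
  have h3 := mul_le_mul h1 h2 (by positivity) (le_trans hp1 h1)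
  have h4 : y01*y10 ≤ |y01| * |y10| := by
    rw [← abs_mul]; exact le_abs_self _
  nlinarith [abs_nonneg y00, abs_nonneg y01, abs_nonneg y10, abs_nonneg y11,
    mul_nonneg (abs_nonneg y01) (abs_nonneg y10)]

-- resolvent existence
lemma res_exists (y00 y01 y10 y11 b0 b1 l : ℝ) (hl : 1 + (|y00|+|y01|+|y10|+|y11|) ≤ l) :
    ∃ ξ0 ξ1 : ℝ, y00*ξ0 + y01*ξ1 + b0 = l*ξ0 ∧ y10*ξ0 + y11*ξ1 + b1 = l*ξ1 := by
  have hd := det_ge y00 y01 y10 y11 l hl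
  have hd0 : (l - y00)*(l - y11) - y01*y10 ≠ 0 := by linarith
  refine ⟨((l - y11)*b0 + y01*b1)/((l - y00)*(l - y11) - y01*y10),
          (y10*b0 + (l - y00)*b1)/((l - y00)*(l - y11) - y01*y10), ?_, ?_⟩
  · linear_combination (-b0) * (mul_inv_cancel₀ hd0)
  · linear_combination (-b1) * (mul_inv_cancel₀ hd0)

-- resolvent bound
lemma res_bound (y00 y01 y10 y11 b0 b1 l ξ0 ξ1 : ℝ)
    (hl : 1 + (|y00|+|y01|+|y10|+|y11|) ≤ l)
    (e0 : y00*ξ0 + y01*ξ1 + b0 = l*ξ0) (e1 : y10*ξ0 + y11*ξ1 + b1 = l*ξ1) :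
    (l - (|y00|+|y01|+|y10|+|y11|)) * (|ξ0| + |ξ1|) ≤ |b0| + |b1| := by
  have hlpos : 0 < l := by
    have := abs_nonneg y00; have := abs_nonneg y01; have := abs_nonneg y10
    have := abs_nonneg y11; linarith
  have habs0 : l * |ξ0| ≤ |y00| * |ξ0| + |y01| * |ξ1| + |b0| := by
    calc l * |ξ0| = |l*ξ0| := by rw [abs_mul, abs_of_pos hlpos]
    _ = |y00*ξ0 + y01*ξ1 + b0| := by rw [← e0]
    _ ≤ |y00*ξ0| + |y01*ξ1| + |b0| := abs_add_three _ _ _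
    _ = |y00| * |ξ0| + |y01| * |ξ1| + |b0| := by rw [abs_mul, abs_mul]
  have habs1 : l * |ξ1| ≤ |y10| * |ξ0| + |y11| * |ξ1| + |b1| := by
    calc l * |ξ1| = |l*ξ1| := by rw [abs_mul, abs_of_pos hlpos]
    _ = |y10*ξ0 + y11*ξ1 + b1| := by rw [← e1]
    _ ≤ |y10*ξ0| + |y11*ξ1| + |b1| := abs_add_three _ _ _
    _ = |y10| * |ξ0| + |y11| * |ξ1| + |b1| := by rw [abs_mul, abs_mul]
  nlinarith [abs_nonneg ξ0, abs_nonneg ξ1, abs_nonneg y00, abs_nonneg y01,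
    abs_nonneg y10, abs_nonneg y11]

-- resolvent uniqueness (scaled)
lemma res_unique (y00 y01 y10 y11 b0 b1 l ξ0 ξ1 ζ0 ζ1 η : ℝ)
    (hl : 1 + (|y00|+|y01|+|y10|+|y11|) ≤ l)
    (e0 : y00*ξ0 + y01*ξ1 + η*b0 = l*ξ0) (e1 : y10*ξ0 + y11*ξ1 + η*b1 = l*ξ1)
    (f0 : y00*ζ0 + y01*ζ1 + b0 = l*ζ0) (f1 : y10*ζ0 + y11*ζ1 + b1 = l*ζ1) :
    ξ0 = η*ζ0 ∧ ξ1 = η*ζ1 := by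
  have hd := det_ge y00 y01 y10 y11 l hl
  have hA : ((l - y00)*(l - y11) - y01*y10) * (ξ0 - η*ζ0) = 0 := by
    linear_combination (y11 - l)*e0 - y01*e1 + (l - y11)*η*f0 + y01*η*f1
  have hB : ((l - y00)*(l - y11) - y01*y10) * (ξ1 - η*ζ1) = 0 := by
    linear_combination (y00 - l)*e1 - y10*e0 + (l - y00)*η*f1 + y10*η*f0
  have hd0 : ((l - y00)*(l - y11) - y01*y10) ≠ 0 := by linarith
  constructor
  · have := mul_eq_zero.mp hA; rcases this with h | h
    · exact absurd h hd0
    · linarith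
  · have := mul_eq_zero.mp hB; rcases this with h | h
    · exact absurd h hd0
    · linarith


set_option maxHeartbeats 1000000 in
lemma keyA (X C : Matrix (Fin 2) (Fin 2) ℝ) (Q : Matrix (Fin 2) (Fin 2) ℝ)
    (u w z : Fin 2 → ℝ) (c : ℝ)
    (hcons : ∀ (v : Fin 2 → ℝ) (a : ℝ),
      sigmaL (blk C w (z + Q *ᵥ v) (c + a)) = sigmaL (blk X u v a)) :
    c = 0 := by
  by_contra hc
  have hcabs : 0 < |c| := abs_pos.mpr hc
  set SX := |X 0 0| + |X 0 1| + |X 1 0| + |X 1 1| with hSX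
  set SU := |u 0| + |u 1| with hSU
  set SC := |C 0 0| + |C 0 1| + |C 1 0| + |C 1 1| with hSC
  set SW := |w 0| + |w 1| with hSW
  set SZ := |z 0| + |z 1| with hSZ
  have hSXn : 0 ≤ SX := by positivity
  have hSUn : 0 ≤ SU := by positivity
  have hSCn : 0 ≤ SC := by positivity
  have hSWn : 0 ≤ SW := by positivity
  have hSZn : 0 ≤ SZ := by positivity
  have hQn : 0 ≤ SZ*SW/|c| := by positivity
  set a := 1 + SX + SU + SC + SW + SZ + |c| + SZ*SW/|c| with ha
  -- resolvent for X
  obtain ⟨ξ0, ξ1, e0, e1⟩ := res_exists (X 0 0) (X 0 1) (X 1 0) (X 1 1) (u 0) (u 1) a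
    (by rw [ha, hSX]; linarith)
  have hbd := res_bound (X 0 0) (X 0 1) (X 1 0) (X 1 1) (u 0) (u 1) a ξ0 ξ1
    (by rw [ha, hSX]; linarith) e0 e1
  have hxi : |ξ0| + |ξ1| < 1 := by
    by_contra hcon
    push_neg at hcon
    have h1 : a - SX ≥ 1 + SU := by rw [ha]; linarith
    nlinarith [abs_nonneg ξ0, abs_nonneg ξ1]
  have hxisq : ξ0^2 + ξ1^2 ≤ 1 := by
    nlinarith [abs_nonneg ξ0, abs_nonneg ξ1, sq_abs ξ0, sq_abs ξ1,
      mul_nonneg (abs_nonneg ξ0) (abs_nonneg ξ1)]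
  -- membership of a in sigmaL (blk X u 0 a)
  have hmem : a ∈ sigmaL (blk X u 0 a) := by
    have := mem_of_eig X u 0 a ξ0 ξ1 e0 e1 hxisq
    simpa using this
  -- transfer
  have hmem' : a ∈ sigmaL (blk C w z (c + a)) := by
    have h := hcons 0 a
    rw [Matrix.mulVec_zero, add_zero] at h
    rw [h]
    exact hmem
  -- extraction
  obtain ⟨p0, p1, η, hη, hpn, f0, f1, f2⟩ := ext_lemma C w z (c + a) a hmem'
    (by
      have hcc : c ≤ |c| := le_abs_self c
      rw [hSC, hSW, hSZ] at *
      rw [ha]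
      linarith)
  -- f2 : z 0 * p0 + z 1 * p1 + (c+a) * η = a * η
  have hzf : z 0 * p0 + z 1 * p1 = -(c*η) := by linarith [f2]
  -- bound on p
  have hbdp := res_bound (C 0 0) (C 0 1) (C 1 0) (C 1 1) (w 0 * η) (w 1 * η) a p0 p1
    (by rw [ha, hSC]; linarith) f0 f1
  have hwb : |w 0 * η| + |w 1 * η| = SW * η := by
    rw [abs_mul, abs_mul, abs_of_pos hη, hSW]; ring
  rw [hwb] at hbdp
  -- |c| * η ≤ SZ * (|p0|+|p1|)
  have hcb : |c| * η ≤ SZ * (|p0| + |p1|) := by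
    have h1 : |c*η| = |c| * η := by rw [abs_mul, abs_of_pos hη]
    have h2 : |z 0 * p0 + z 1 * p1| ≤ |z 0| * |p0| + |z 1| * |p1| := by
      calc |z 0 * p0 + z 1 * p1| ≤ |z 0 * p0| + |z 1 * p1| := abs_add_le _ _
      _ = |z 0| * |p0| + |z 1| * |p1| := by rw [abs_mul, abs_mul]
    have h3 : |z 0 * p0 + z 1 * p1| = |c| * η := by rw [hzf, abs_neg, h1]
    rw [hSZ]
    nlinarith [abs_nonneg (z 0), abs_nonneg (z 1), abs_nonneg p0, abs_nonneg p1]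
  -- combine
  have hden : SZ*SW/|c| * |c| = SZ*SW := by field_simp
  have hfin : a - SC > SZ*SW/|c| := by rw [ha]; linarith
  have haSC : (0:ℝ) ≤ a - SC := le_trans hQn hfin.le
  have k1 : |c| * η*(a-SC) ≤ SZ*(|p0|+|p1|)*(a-SC) :=
    mul_le_mul_of_nonneg_right hcb haSC
  have k2 : SZ*(|p0|+|p1|)*(a-SC) ≤ SZ*(SW*η) := by
    have h := mul_le_mul_of_nonneg_left hbdp hSZn
    calc SZ*(|p0|+|p1|)*(a-SC) = SZ*((a-SC)*(|p0|+|p1|)) := by ring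
    _ ≤ SZ*(SW*η) := h
  have k3 : SZ*SW*η < |c| * η*(a-SC) := by
    have h := mul_lt_mul_of_pos_left hfin (mul_pos hcabs hη)
    have h2 : |c| * η*(SZ*SW/|c|) = SZ*SW*η := by field_simp
    calc SZ*SW*η = |c| * η*(SZ*SW/|c|) := h2.symm
    _ < |c| * η*(a-SC) := h
  have : SZ*(SW*η) = SZ*SW*η := by ring
  linarith

set_option maxHeartbeats 2000000 in
lemma keyB (X C : Matrix (Fin 2) (Fin 2) ℝ) (u w zv : Fin 2 → ℝ) (v0 v1 : ℝ)
    (htr : ∀ (l a : ℝ), l ∈ sigmaL (blk X u ![v0,v1] a) → l ∈ sigmaL (blk C w zv a)) :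
    zv 0*w 0 + zv 1*w 1 = v0*u 0 + v1*u 1 ∧
    zv 0*(C 0 1*w 1 - C 1 1*w 0) + zv 1*(C 1 0*w 0 - C 0 0*w 1) + (v0*u 0 + v1*u 1)*(C 0 0 + C 1 1)
      = v0*(X 0 1*u 1 - X 1 1*u 0) + v1*(X 1 0*u 0 - X 0 0*u 1) + (zv 0*w 0 + zv 1*w 1)*(X 0 0 + X 1 1) := by
  set SX := |X 0 0| + |X 0 1| + |X 1 0| + |X 1 1| with hSX
  set SU := |u 0| + |u 1| with hSU
  set SC := |C 0 0| + |C 0 1| + |C 1 0| + |C 1 1| with hSC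
  set SW := |w 0| + |w 1| with hSW
  set SZ := |zv 0| + |zv 1| with hSZ
  set SV := |v0| + |v1| with hSV
  have hSXn : 0 ≤ SX := by positivity
  have hSUn : 0 ≤ SU := by positivity
  have hSCn : 0 ≤ SC := by positivity
  have hSWn : 0 ≤ SW := by positivity
  have hSZn : 0 ≤ SZ := by positivity
  have hSVn : 0 ≤ SV := by positivity
  set L := 1 + SX + SU + SC + SW + SZ + SV*SU with hL
  have hG : ∀ l : ℝ, L ≤ l →
      ((zv 0*w 0 + zv 1*w 1)*l
        + (zv 0*(C 0 1*w 1 - C 1 1*w 0) + zv 1*(C 1 0*w 0 - C 0 0*w 1)))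
        * ((l - X 0 0)*(l - X 1 1) - X 0 1*X 1 0)
      = ((v0*u 0 + v1*u 1)*l
        + (v0*(X 0 1*u 1 - X 1 1*u 0) + v1*(X 1 0*u 0 - X 0 0*u 1)))
        * ((l - C 0 0)*(l - C 1 1) - C 0 1*C 1 0) := by
    intro l hl
    have hmul : 0 ≤ SV*SU := mul_nonneg hSVn hSUn
    -- resolvent for X
    obtain ⟨ξ0, ξ1, e0, e1⟩ := res_exists (X 0 0) (X 0 1) (X 1 0) (X 1 1) (u 0) (u 1) l
      (by rw [hSX] at *; linarith)
    have hbd := res_bound (X 0 0) (X 0 1) (X 1 0) (X 1 1) (u 0) (u 1) l ξ0 ξ1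
      (by rw [hSX] at *; linarith) e0 e1
    have hxiSU : |ξ0| + |ξ1| ≤ SU := by
      nlinarith [abs_nonneg ξ0, abs_nonneg ξ1]
    have hxi : |ξ0| + |ξ1| < 1 := by
      by_contra hcon
      push_neg at hcon
      nlinarith [abs_nonneg ξ0, abs_nonneg ξ1]
    have hxisq : ξ0^2 + ξ1^2 ≤ 1 := by
      nlinarith [abs_nonneg ξ0, abs_nonneg ξ1, sq_abs ξ0, sq_abs ξ1,
        mul_nonneg (abs_nonneg ξ0) (abs_nonneg ξ1)]
    -- membership
    have hmem0 := mem_of_eig X u ![v0,v1] l ξ0 ξ1 e0 e1 hxisq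
    have hvv0 : (![v0,v1] : Fin 2 → ℝ) 0 = v0 := rfl
    have hvv1 : (![v0,v1] : Fin 2 → ℝ) 1 = v1 := rfl
    rw [hvv0, hvv1] at hmem0
    -- transfer
    have hmem' := htr l (l - (v0*ξ0 + v1*ξ1)) hmem0
    -- bound on v.ξ
    have hvxi : |v0*ξ0 + v1*ξ1| ≤ SV*SU := by
      calc |v0*ξ0 + v1*ξ1| ≤ |v0*ξ0| + |v1*ξ1| := abs_add_le _ _
      _ = |v0| * |ξ0| + |v1| * |ξ1| := by rw [abs_mul, abs_mul]
      _ ≤ SV*SU := by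
        rw [hSV]
        nlinarith [abs_nonneg v0, abs_nonneg v1, abs_nonneg ξ0, abs_nonneg ξ1]
    -- extraction
    obtain ⟨p0, p1, η, hη, hpn, f0, f1, f2⟩ := ext_lemma C w zv (l - (v0*ξ0 + v1*ξ1)) l hmem'
      (by
        have h1 := abs_le.mp hvxi
        rw [hSC, hSW, hSZ] at *
        linarith)
    -- resolvent for C
    obtain ⟨ζ0, ζ1, g0, g1⟩ := res_exists (C 0 0) (C 0 1) (C 1 0) (C 1 1) (w 0) (w 1) l
      (by rw [hSC] at *; linarith)
    -- uniqueness
    obtain ⟨hp0, hp1⟩ := res_unique (C 0 0) (C 0 1) (C 1 0) (C 1 1) (w 0) (w 1) l p0 p1 ζ0 ζ1 η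
      (by rw [hSC] at *; linarith)
      (by linarith [f0]) (by linarith [f1]) g0 g1
    rw [hp0, hp1] at f2
    -- scalar identity
    have h9 : zv 0*ζ0 + zv 1*ζ1 = v0*ξ0 + v1*ξ1 := by
      apply mul_left_cancel₀ (ne_of_gt hη)
      linear_combination f2
    -- polynomial identities
    have hdx0 : ((l - X 0 0)*(l - X 1 1) - X 0 1*X 1 0)*ξ0 = (l - X 1 1)*u 0 + X 0 1*u 1 := by
      linear_combination (X 1 1 - l)*e0 - X 0 1*e1
    have hdx1 : ((l - X 0 0)*(l - X 1 1) - X 0 1*X 1 0)*ξ1 = X 1 0*u 0 + (l - X 0 0)*u 1 := by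
      linear_combination (X 0 0 - l)*e1 - X 1 0*e0
    have hdc0 : ((l - C 0 0)*(l - C 1 1) - C 0 1*C 1 0)*ζ0 = (l - C 1 1)*w 0 + C 0 1*w 1 := by
      linear_combination (C 1 1 - l)*g0 - C 0 1*g1
    have hdc1 : ((l - C 0 0)*(l - C 1 1) - C 0 1*C 1 0)*ζ1 = C 1 0*w 0 + (l - C 0 0)*w 1 := by
      linear_combination (C 0 0 - l)*g1 - C 1 0*g0
    -- assemble
    linear_combination (-((l - X 0 0)*(l - X 1 1) - X 0 1*X 1 0))*(zv 0*hdc0 + zv 1*hdc1)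
      + ((l - X 0 0)*(l - X 1 1) - X 0 1*X 1 0)*((l - C 0 0)*(l - C 1 1) - C 0 1*C 1 0)*h9
      + ((l - C 0 0)*(l - C 1 1) - C 0 1*C 1 0)*(v0*hdx0 + v1*hdx1)
  -- make L opaque so that ring normalization stays small
  clear_value L
  -- four-point extraction
  have hL1 : L ≤ L + 1 := by linarith
  have hL2 : L ≤ L + 2 := by linarith
  have hL3 : L ≤ L + 3 := by linarith
  have hL4 : L ≤ L + 4 := by linarith
  have G1 := hG (L+1) hL1
  have G2 := hG (L+2) hL2
  have G3 := hG (L+3) hL3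
  have G4 := hG (L+4) hL4
  have hpr : zv 0*w 0 + zv 1*w 1 = v0*u 0 + v1*u 1 := by
    linear_combination (1/6 : ℝ)*G4 - (1/2 : ℝ)*G3 + (1/2 : ℝ)*G2 - (1/6 : ℝ)*G1
  refine ⟨hpr, ?_⟩
  linear_combination (1/2 : ℝ)*G3 - G2 + (1/2 : ℝ)*G1 - (3*L + 6)*hpr

set_option maxHeartbeats 2000000 in
lemma keyC (X C Q : Matrix (Fin 2) (Fin 2) ℝ) (u w z : Fin 2 → ℝ)
    (hQ : Qᵀ * Q = 1)
    (hcons : ∀ (v : Fin 2 → ℝ) (a : ℝ),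
      sigmaL (blk C w (z + Q *ᵥ v) a) = sigmaL (blk X u v a)) :
    w = Q *ᵥ u ∧
    (u 0*(X 1 0*u 0 + X 1 1*u 1) - u 1*(X 0 0*u 0 + X 0 1*u 1) ≠ 0 →
      z 0 = 0 ∧ z 1 = 0) := by
  -- transfer
  have htr : ∀ (v0 v1 l a : ℝ), l ∈ sigmaL (blk X u ![v0,v1] a) →
      l ∈ sigmaL (blk C w (z + Q *ᵥ ![v0,v1]) a) := by
    intro v0 v1 l a hmem
    rw [hcons ![v0,v1] a]
    exact hmem
  -- components of z + Q *ᵥ v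
  have hcomp : ∀ (v0 v1 : ℝ) (i : Fin 2),
      (z + Q *ᵥ ![v0,v1]) i = z i + (Q i 0 * v0 + Q i 1 * v1) := by
    intro v0 v1 i
    simp [Matrix.mulVec, dotProduct, Fin.sum_univ_two]
    fin_cases i <;> rfl
  -- keyB at (0,0)
  obtain ⟨P100, P200⟩ := keyB X C u w (z + Q *ᵥ ![0,0]) 0 0 (htr 0 0)
  rw [hcomp 0 0 0, hcomp 0 0 1] at P100 P200
  -- keyB at (1,0)
  obtain ⟨P110, P210⟩ := keyB X C u w (z + Q *ᵥ ![1,0]) 1 0 (htr 1 0)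
  rw [hcomp 1 0 0, hcomp 1 0 1] at P110 P210
  -- keyB at (0,1)
  obtain ⟨P101, P201⟩ := keyB X C u w (z + Q *ᵥ ![0,1]) 0 1 (htr 0 1)
  rw [hcomp 0 1 0, hcomp 0 1 1] at P101 P201
  ring_nf at P100 P200 P110 P210 P101 P201
  -- orthogonality entries of Q * Qᵀ = 1
  have hQ' : Q * Qᵀ = 1 := mul_eq_one_comm.mp hQ
  have e00 : Q 0 0 * Q 0 0 + Q 0 1 * Q 0 1 = 1 := by
    have := congrFun (congrFun hQ' 0) 0
    simpa [Matrix.mul_apply, Fin.sum_univ_two, Matrix.one_apply] using this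
  have e01 : Q 0 0 * Q 1 0 + Q 0 1 * Q 1 1 = 0 := by
    have := congrFun (congrFun hQ' 0) 1
    simpa [Matrix.mul_apply, Fin.sum_univ_two, Matrix.one_apply] using this
  have e11 : Q 1 0 * Q 1 0 + Q 1 1 * Q 1 1 = 1 := by
    have := congrFun (congrFun hQ' 1) 1
    simpa [Matrix.mul_apply, Fin.sum_univ_two, Matrix.one_apply] using this
  -- z ⬝ w = 0
  have hz1 : z 0 * w 0 + z 1 * w 1 = 0 := by linear_combination P100
  -- column relations
  have hu0 : Q 0 0 * w 0 + Q 1 0 * w 1 = u 0 := by linear_combination P110 - P100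
  have hu1 : Q 0 1 * w 0 + Q 1 1 * w 1 = u 1 := by linear_combination P101 - P100
  -- w = Q u (componentwise)
  have hw0 : w 0 = Q 0 0 * u 0 + Q 0 1 * u 1 := by
    linear_combination Q 0 0 * hu0 + Q 0 1 * hu1 - w 0 * e00 - w 1 * e01
  have hw1 : w 1 = Q 1 0 * u 0 + Q 1 1 * u 1 := by
    linear_combination Q 1 0 * hu0 + Q 1 1 * hu1 - w 0 * e01 - w 1 * e11
  have hwQu : w = Q *ᵥ u := by
    funext i
    have : (Q *ᵥ u) i = Q i 0 * u 0 + Q i 1 * u 1 := by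
      simp [Matrix.mulVec, dotProduct, Fin.sum_univ_two]
    fin_cases i <;> rw [this] <;> [exact hw0; exact hw1]
  refine ⟨hwQu, ?_⟩
  intro hD
  -- z ⬝ (Kw) = 0 where Kw = (C - tr C) w
  have hz2 : z 0 * (C 0 1*w 1 - C 1 1*w 0) + z 1 * (C 1 0*w 0 - C 0 0*w 1) = 0 := by
    linear_combination P200 + (X 0 0 + X 1 1) * hz1
  -- Qᵀ (Kw) relations
  have hk0 : Q 0 0 * (C 0 1*w 1 - C 1 1*w 0) + Q 1 0 * (C 1 0*w 0 - C 0 0*w 1)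
      = (X 0 1*u 1 - X 1 1*u 0) + u 0 * ((X 0 0 + X 1 1) - (C 0 0 + C 1 1)) := by
    linear_combination P210 - P200 + (X 0 0 + X 1 1) * hu0
  have hk1 : Q 0 1 * (C 0 1*w 1 - C 1 1*w 0) + Q 1 1 * (C 1 0*w 0 - C 0 0*w 1)
      = (X 1 0*u 0 - X 0 0*u 1) + u 1 * ((X 0 0 + X 1 1) - (C 0 0 + C 1 1)) := by
    linear_combination P201 - P200 + (X 0 0 + X 1 1) * hu1
  -- Kw = Q ŝ
  have hk0' : C 0 1*w 1 - C 1 1*w 0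
      = Q 0 0 * ((X 0 1*u 1 - X 1 1*u 0) + u 0 * ((X 0 0 + X 1 1) - (C 0 0 + C 1 1)))
      + Q 0 1 * ((X 1 0*u 0 - X 0 0*u 1) + u 1 * ((X 0 0 + X 1 1) - (C 0 0 + C 1 1))) := by
    linear_combination Q 0 0 * hk0 + Q 0 1 * hk1 - (C 0 1*w 1 - C 1 1*w 0) * e00
      - (C 1 0*w 0 - C 0 0*w 1) * e01
  have hk1' : C 1 0*w 0 - C 0 0*w 1
      = Q 1 0 * ((X 0 1*u 1 - X 1 1*u 0) + u 0 * ((X 0 0 + X 1 1) - (C 0 0 + C 1 1)))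
      + Q 1 1 * ((X 1 0*u 0 - X 0 0*u 1) + u 1 * ((X 0 0 + X 1 1) - (C 0 0 + C 1 1))) := by
    linear_combination Q 1 0 * hk0 + Q 1 1 * hk1 - (C 0 1*w 1 - C 1 1*w 0) * e01
      - (C 1 0*w 0 - C 0 0*w 1) * e11
  -- determinant of Q
  have hdq : (Q 0 0*Q 1 1 - Q 0 1*Q 1 0)^2 = 1 := by
    linear_combination (Q 1 0*Q 1 0 + Q 1 1*Q 1 1)*e00 + e11 - (Q 0 0*Q 1 0 + Q 0 1*Q 1 1)*e01
  have hdqne : Q 0 0*Q 1 1 - Q 0 1*Q 1 0 ≠ 0 := by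
    intro h
    rw [h] at hdq
    norm_num at hdq
  -- determinant of [w, Kw]
  have hdet : w 0*(C 1 0*w 0 - C 0 0*w 1) - w 1*(C 0 1*w 1 - C 1 1*w 0)
      = (Q 0 0*Q 1 1 - Q 0 1*Q 1 0)
        * (u 0*(X 1 0*u 0 + X 1 1*u 1) - u 1*(X 0 0*u 0 + X 0 1*u 1)) := by
    rw [hk0', hk1', hw0, hw1]
    ring
  have hdne : w 0*(C 1 0*w 0 - C 0 0*w 1) - w 1*(C 0 1*w 1 - C 1 1*w 0) ≠ 0 := by
    rw [hdet]
    exact mul_ne_zero hdqne hD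
  constructor
  · have h0 : z 0 * (w 0*(C 1 0*w 0 - C 0 0*w 1) - w 1*(C 0 1*w 1 - C 1 1*w 0)) = 0 := by
      linear_combination (C 1 0*w 0 - C 0 0*w 1)*hz1 - w 1*hz2
    rcases mul_eq_zero.mp h0 with h | h
    · exact h
    · exact absurd h hdne
  · have h1 : z 1 * (w 0*(C 1 0*w 0 - C 0 0*w 1) - w 1*(C 0 1*w 1 - C 1 1*w 0)) = 0 := by
      linear_combination w 0*hz2 - (C 0 1*w 1 - C 1 1*w 0)*hz1
    rcases mul_eq_zero.mp h1 with h | h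
    · exact h
    · exact absurd h hdne

theorem image_of_S2_S3_partial
    (φ : Matrix (Fin 3) (Fin 3) ℝ →ₗ[ℝ] Matrix (Fin 3) (Fin 3) ℝ)
    (hφ : ∀ A, sigmaL (φ A) = sigmaL A)
    (Q : Matrix (Fin 2) (Fin 2) ℝ) (hQ : Qᵀ * Q = 1)
    (hQφ : ∀ (v : Fin 2 → ℝ) (a : ℝ), φ (blk 0 0 v a) = blk 0 0 (Q *ᵥ v) a) :
    (∀ At : Matrix (Fin 2) (Fin 2) ℝ, ∃ Ct : Matrix (Fin 2) (Fin 2) ℝ,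
      φ (blk At 0 0 0) = blk Ct 0 0 0) ∧
    (∀ u : Fin 2 → ℝ, ∃ Bt : Matrix (Fin 2) (Fin 2) ℝ,
      φ (blk 0 u 0 0) = blk Bt (Q *ᵥ u) 0 0) := by
  -- master lemma for each pair (X, u)
  have master : ∀ (X : Matrix (Fin 2) (Fin 2) ℝ) (u : Fin 2 → ℝ),
      ∃ (Ct : Matrix (Fin 2) (Fin 2) ℝ) (zt : Fin 2 → ℝ),
        φ (blk X u 0 0) = blk Ct (Q *ᵥ u) zt 0 ∧
        (u 0*(X 1 0*u 0 + X 1 1*u 1) - u 1*(X 0 0*u 0 + X 0 1*u 1) ≠ 0 →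
          zt 0 = 0 ∧ zt 1 = 0) := by
    intro X u
    set N := φ (blk X u 0 0) with hN
    set CN : Matrix (Fin 2) (Fin 2) ℝ := Matrix.of ![![N 0 0, N 0 1], ![N 1 0, N 1 1]] with hCN
    set wN : Fin 2 → ℝ := ![N 0 2, N 1 2] with hwN
    set zN : Fin 2 → ℝ := ![N 2 0, N 2 1] with hzN
    have hNblk : N = blk CN wN zN (N 2 2) := eq_blk N
    have hcons0 : ∀ (v : Fin 2 → ℝ) (a : ℝ),
        sigmaL (blk CN wN (zN + Q *ᵥ v) (N 2 2 + a)) = sigmaL (blk X u v a) := by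
      intro v a
      have hsplit : blk X u v a = blk X u 0 0 + blk 0 0 v a := by
        rw [blk_add]
        congr 1 <;> simp
      have himg : φ (blk X u v a) = blk CN wN (zN + Q *ᵥ v) (N 2 2 + a) := by
        rw [hsplit, map_add, hQφ, ← hN, hNblk, blk_add]
        congr 1 <;> simp
      rw [← himg, hφ]
    have hc0 : N 2 2 = 0 := keyA X CN Q u wN zN (N 2 2) hcons0
    have hcons1 : ∀ (v : Fin 2 → ℝ) (a : ℝ),
        sigmaL (blk CN wN (zN + Q *ᵥ v) a) = sigmaL (blk X u v a) := by
      intro v a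
      have := hcons0 v a
      rwa [hc0, zero_add] at this
    obtain ⟨hw, hz⟩ := keyC X CN Q u wN zN hQ hcons1
    refine ⟨CN, zN, ?_, hz⟩
    show N = blk CN (Q *ᵥ u) zN 0
    conv_lhs => rw [hNblk]
    rw [hw, hc0]
  -- vanishing of the bottom-left row for nondegenerate pairs
  have hzero : ∀ (X : Matrix (Fin 2) (Fin 2) ℝ) (u : Fin 2 → ℝ),
      u 0*(X 1 0*u 0 + X 1 1*u 1) - u 1*(X 0 0*u 0 + X 0 1*u 1) ≠ 0 →
      φ (blk X u 0 0) 2 0 = 0 ∧ φ (blk X u 0 0) 2 1 = 0 := by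
    intro X u hD
    obtain ⟨Ct, zt, heq, hz⟩ := master X u
    obtain ⟨h0, h1⟩ := hz hD
    rw [heq]
    simp [h0, h1]
  -- additivity of the bottom row entries
  have hadd : ∀ (X X' : Matrix (Fin 2) (Fin 2) ℝ) (u u' : Fin 2 → ℝ) (j : Fin 3),
      φ (blk (X + X') (u + u') 0 0) 2 j = φ (blk X u 0 0) 2 j + φ (blk X' u' 0 0) 2 j := by
    intro X X' u u' j
    have : blk (X + X') (u + u') 0 0 = blk X u 0 0 + blk X' u' 0 0 := by
      rw [blk_add]
      congr 1 <;> simp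
    rw [this, map_add, Matrix.add_apply]
  -- the rotation matrix
  set R : Matrix (Fin 2) (Fin 2) ℝ := Matrix.of ![![0,-1],![1,0]] with hR
  set e₀ : Fin 2 → ℝ := ![1,0] with he₀
  have hR00 : R 0 0 = 0 := rfl
  have hR01 : R 0 1 = -1 := rfl
  have hR10 : R 1 0 = 1 := rfl
  have hR11 : R 1 1 = 0 := rfl
  have hz_Re : φ (blk R e₀ 0 0) 2 0 = 0 ∧ φ (blk R e₀ 0 0) 2 1 = 0 := by
    apply hzero
    rw [hR00, hR01, hR10, hR11]
    norm_num [he₀]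
  have hz_2Re : φ (blk (R + R) e₀ 0 0) 2 0 = 0 ∧ φ (blk (R + R) e₀ 0 0) 2 1 = 0 := by
    apply hzero
    have h10 : (R + R) 1 0 = 2 := by rw [Matrix.add_apply, hR10]; norm_num
    have h11 : (R + R) 1 1 = 0 := by rw [Matrix.add_apply, hR11]; norm_num
    have h00 : (R + R) 0 0 = 0 := by rw [Matrix.add_apply, hR00]; norm_num
    have h01 : (R + R) 0 1 = -2 := by rw [Matrix.add_apply, hR01]; norm_num
    rw [h10, h11, h00, h01]
    norm_num [he₀]
  -- z(R, 0) = 0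
  have hz_R0 : ∀ j : Fin 3, φ (blk R 0 0 0) 2 j = 0 := by
    intro j
    have h := hadd R R e₀ 0 j
    rw [show e₀ + (0 : Fin 2 → ℝ) = e₀ by simp] at h
    rcases fin3_cases j with rfl | rfl | rfl
    · rw [hz_2Re.1, hz_Re.1] at h; linarith
    · rw [hz_2Re.2, hz_Re.2] at h; linarith
    · -- j = 2 entry: from master, N 2 2 = 0 always
      obtain ⟨Ct, zt, heq, _⟩ := master R 0
      rw [heq]; simp
  -- z(0, e₀) = 0
  have hz_0e : ∀ j : Fin 3, j ≠ 2 → φ (blk 0 e₀ 0 0) 2 j = 0 := by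
    intro j hj
    have h := hadd R 0 0 e₀ j
    rw [show R + (0 : Matrix (Fin 2) (Fin 2) ℝ) = R by simp,
        show (0 : Fin 2 → ℝ) + e₀ = e₀ by simp] at h
    rw [hz_R0 j] at h
    rcases fin3_cases j with rfl | rfl | rfl
    · rw [hz_Re.1] at h; linarith
    · rw [hz_Re.2] at h; linarith
    · exact absurd rfl hj
  -- z(0, u) = 0 for every u
  have hz_0u : ∀ (u : Fin 2 → ℝ) (j : Fin 3), j ≠ 2 → φ (blk 0 u 0 0) 2 j = 0 := by
    intro u j hj
    by_cases hu : u = 0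
    · subst hu
      rw [blk_zero, map_zero]
      rfl
    · have hune : u 0 ≠ 0 ∨ u 1 ≠ 0 := by
        by_contra hc
        push_neg at hc
        exact hu (funext fun i => by fin_cases i <;> simp [hc.1, hc.2])
      have hDu : u 0*(R 1 0*u 0 + R 1 1*u 1) - u 1*(R 0 0*u 0 + R 0 1*u 1) ≠ 0 := by
        rw [hR00, hR01, hR10, hR11]
        have h2 : u 0*(1*u 0 + 0*u 1) - u 1*(0*u 0 + (-1)*u 1) = u 0^2 + u 1^2 := by ring
        rw [h2]
        rcases hune with h | h
        · positivity
        · positivity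
      have hzRu := hzero R u hDu
      have h := hadd R 0 0 u j
      rw [show R + (0 : Matrix (Fin 2) (Fin 2) ℝ) = R by simp,
          show (0 : Fin 2 → ℝ) + u = u by simp] at h
      rw [hz_R0 j] at h
      rcases fin3_cases j with rfl | rfl | rfl
      · rw [hzRu.1] at h; linarith
      · rw [hzRu.2] at h; linarith
      · exact absurd rfl hj
  -- z(t • R, 0) = 0
  have hz_tR0 : ∀ (t : ℝ) (j : Fin 3), φ (blk (t • R) 0 0 0) 2 j = 0 := by
    intro t j
    have hsm : blk (t • R) 0 0 0 = t • blk R 0 0 0 := by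
      rw [blk_smul]
      congr 1 <;> simp
    rw [hsm, φ.map_smul, Matrix.smul_apply, hz_R0 j, smul_zero]
  -- z(X, 0) = 0 for every X
  have hz_X0 : ∀ (X : Matrix (Fin 2) (Fin 2) ℝ) (j : Fin 3), j ≠ 2 →
      φ (blk X 0 0 0) 2 j = 0 := by
    intro X j hj
    set t := 1 - X 1 0 with ht
    have hDX : e₀ 0*((X + t • R) 1 0*e₀ 0 + (X + t • R) 1 1*e₀ 1)
        - e₀ 1*((X + t • R) 0 0*e₀ 0 + (X + t • R) 0 1*e₀ 1) ≠ 0 := by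
      have h10 : (X + t • R) 1 0 = X 1 0 + t := by
        rw [Matrix.add_apply, Matrix.smul_apply, hR10, smul_eq_mul]; ring
      rw [h10]
      norm_num [he₀, ht]
    have hzX := hzero (X + t • R) e₀ hDX
    have h1 := hadd X (t • R) 0 e₀ j
    rw [show (0 : Fin 2 → ℝ) + e₀ = e₀ by simp] at h1
    have h2 := hadd (t • R) 0 0 e₀ j
    rw [show t • R + (0 : Matrix (Fin 2) (Fin 2) ℝ) = t • R by simp,
        show (0 : Fin 2 → ℝ) + e₀ = e₀ by simp] at h2
    rw [hz_tR0 t j] at h2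
    rcases fin3_cases j with rfl | rfl | rfl
    · rw [hzX.1] at h1
      rw [hz_0e 0 (by decide)] at h2
      rw [h2] at h1
      linarith
    · rw [hzX.2] at h1
      rw [hz_0e 1 (by decide)] at h2
      rw [h2] at h1
      linarith
    · exact absurd rfl hj
  -- conclusion
  constructor
  · intro At
    obtain ⟨Ct, zt, heq, _⟩ := master At 0
    refine ⟨Ct, ?_⟩
    have hzt0 : zt 0 = 0 := by
      have := hz_X0 At 0 (by decide)
      rw [heq] at this
      simpa using this
    have hzt1 : zt 1 = 0 := by
      have := hz_X0 At 1 (by decide)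
      rw [heq] at this
      simpa using this
    have hztz : zt = 0 := funext fun i => by fin_cases i <;> simpa [hzt0, hzt1]
    rw [heq, hztz, Matrix.mulVec_zero]
  · intro u
    obtain ⟨Bt, zt, heq, _⟩ := master 0 u
    refine ⟨Bt, ?_⟩
    have hzt0 : zt 0 = 0 := by
      have := hz_0u u 0 (by decide)
      rw [heq] at this
      simpa using this
    have hzt1 : zt 1 = 0 := by
      have := hz_0u u 1 (by decide)
      rw [heq] at this
      simpa using this
    have hztz : zt = 0 := funext fun i => by fin_cases i <;> simpa [hzt0, hzt1]
    rw [heq, hztz]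
end
end
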